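/- arXiv:1106.1844 — 7 statements merged into one kernel-verified Lean document; each statement's English description precedes it below -/
import Mathlib

section
/- Let (m, m₁, m₂) be a Markoff triple with associated Markoff form f_m, and let θ be an irrational real number that is ± equivalent to a root of f_m(x,1) = 0. Then m·‖m·θ‖ = 2/(3 + √(9 − 4·m⁻²)). -/
noncomputable def distNearestInt (x : ℝ) : ℝ := sInf (Set.range fun p : ℤ => |x - p|)

noncomputable def phi (θ : ℝ) : ℝ :=
  sInf {x : ℝ | ∃ q : ℕ, 0 < q ∧ x = q * distNearestInt (q * θ)}

def PMEquiv (θ θ' : ℝ) : Prop := (∃ k : ℤ, θ + θ' = k) ∨ (∃ k : ℤ, θ - θ' = k)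

def IsMarkoffTriple (m m₁ m₂ : ℤ) : Prop :=
  1 ≤ m₂ ∧ m₂ ≤ m₁ ∧ m₁ ≤ m ∧ m ^ 2 + m₁ ^ 2 + m₂ ^ 2 = 3 * m * m₁ * m₂

def IsMarkoffU (m m₁ m₂ u : ℤ) : Prop :=
  IsLeast {w : ℤ | 0 < w ∧ (m₂ * w ≡ m₁ [ZMOD m] ∨ m₂ * w ≡ -m₁ [ZMOD m])} u

def IsMarkoffFormRoot (m u v : ℤ) (α : ℝ) : Prop :=
  (m : ℝ) * α ^ 2 + (3 * m - 2 * u) * α + ((v : ℝ) - 3 * u) = 0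

noncomputable def cfVal : List ℝ → ℝ
  | [] => 0
  | a :: l => a + 1 / cfVal l

noncomputable def cfInfVal (a : ℕ → ℝ) : ℝ :=
  Filter.limUnder Filter.atTop fun n => cfVal ((List.range (n + 1)).map a)

noncomputable def mu (A : ℕ → ℕ) (n : ℕ) : ℝ :=
  cfVal ((0 : ℝ) :: (List.range n).reverse.map (fun i => (A i : ℝ))) +
    cfInfVal (fun k => (A (n + k) : ℝ))

def form41 (r : ℕ → ℕ) (n : ℕ) : ℕ :=
  if h : n < 2 * r 0 + 2 then (if n = 0 then 2 else if n ≤ 2 * r 0 then 1 else 2)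
  else form41 (fun i => r (i + 1)) (n - (2 * r 0 + 2))
termination_by n
decreasing_by omega

def blockSeq (a b : ℕ) (s : ℕ → ℕ) (n : ℕ) : ℕ :=
  if h : n < s 0 + 1 then (if n < s 0 then a else b)
  else blockSeq a b (fun i => s (i + 1)) (n - (s 0 + 1))
termination_by n
decreasing_by omega

def CondA (r : ℕ → ℕ) : Prop := ∀ i : ℕ, |(r (i + 1) : ℤ) - (r i : ℤ)| ≤ 1

def CondB (r : ℕ → ℕ) : Prop :=
  ∀ i : ℕ,
    ((r (i + 1) + 1 = r i) → ∀ j, 1 ≤ j → j ≤ i →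
      (∀ k, 1 ≤ k → k < j → r (i + k + 1) = r (i - k)) →
      r (i + j + 1) ≠ r (i - j) → r (i - j) < r (i + j + 1)) ∧
    ((r (i + 1) = r i + 1) → ∀ j, 1 ≤ j → j ≤ i →
      (∀ k, 1 ≤ k → k < j → r (i + k + 1) = r (i - k)) →
      r (i + j + 1) ≠ r (i - j) → r (i + j + 1) < r (i - j))

def CondC01 (r : ℕ → ℕ) : Prop :=
  r 0 ≤ r 1 ∧ ∀ i : ℕ, r (i + 1) + 1 = r i → ∃ j, 1 ≤ j ∧ j ≤ i ∧ r (i - j) < r (i + j + 1)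

def CondC10 (r : ℕ → ℕ) : Prop :=
  r 1 ≤ r 0 ∧ ∀ i : ℕ, r (i + 1) = r i + 1 → ∃ j, 1 ≤ j ∧ j ≤ i ∧ r (i + j + 1) < r (i - j)

def MemM01 (r : ℕ → ℕ) : Prop := CondA r ∧ CondB r ∧ CondC01 r
def MemM10 (r : ℕ → ℕ) : Prop := CondA r ∧ CondB r ∧ CondC10 r

def SeqEquiv (r r' : ℕ → ℕ) : Prop := ∃ k l : ℕ, ∀ i, r (k + i) = r' (l + i)

/-! With `x = m α - u`, the relation `m v = u² + 1` turns `m f_m(α, 1) = 0` into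
`x² + 3 m x + 1 = 0`, whose roots are `-δ` and `δ - 3m` for `δ = (3m - √(9m² - 4))/2`.
Hence `m α ≡ ±δ` modulo `ℤ`, and so is `m θ`, because `‖n x‖` only depends on the
± equivalence class of `x`. As `0 < δ ≤ 1/2`, `‖m θ‖ = δ`, and `δ = 2/(3m + √(9m² - 4))`
gives the stated value of `m ‖m θ‖`. -/

open Real

lemma distNearestInt_intCast_add (n : ℤ) (x : ℝ) :
    distNearestInt (n + x) = distNearestInt x := by
  unfold distNearestInt
  rw [← (Equiv.addRight n).surjective.range_comp]
  congr 2 with p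
  show |(n : ℝ) + x - ((p + n : ℤ) : ℝ)| = |x - p|
  push_cast
  ring_nf

lemma distNearestInt_neg (x : ℝ) : distNearestInt (-x) = distNearestInt x := by
  unfold distNearestInt
  rw [← (Equiv.neg ℤ).surjective.range_comp]
  congr 2 with p
  show |-x - ((-p : ℤ) : ℝ)| = |x - p|
  rw [← abs_neg]
  push_cast
  ring_nf

lemma distNearestInt_of_abs_le_half {x : ℝ} (hx : |x| ≤ 1 / 2) : distNearestInt x = |x| := by
  refine IsLeast.csInf_eq ⟨⟨0, by simp⟩, ?_⟩
  rintro _ ⟨p, rfl⟩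
  rcases eq_or_ne p 0 with rfl | hp
  · simp
  · have hp : (1 : ℝ) ≤ |(p : ℝ)| := by exact_mod_cast Int.one_le_abs hp
    calc |x| ≤ |(p : ℝ)| - |x| := by linarith
      _ ≤ |(p : ℝ) - x| := abs_sub_abs_le_abs_sub _ _
      _ = |x - p| := abs_sub_comm _ _

lemma PMEquiv.distNearestInt_intCast_mul {θ θ' : ℝ} (h : PMEquiv θ θ') (n : ℤ) :
    distNearestInt (n * θ) = distNearestInt (n * θ') := by
  rcases h with ⟨k, hk⟩ | ⟨k, hk⟩
  · rw [show (n : ℝ) * θ = ((n * k : ℤ) : ℝ) + -(n * θ') by push_cast; linear_combination n * hk,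
      distNearestInt_intCast_add, distNearestInt_neg]
  · rw [show (n : ℝ) * θ = ((n * k : ℤ) : ℝ) + n * θ' by push_cast; linear_combination n * hk,
      distNearestInt_intCast_add]

/-- The smaller root of `y² - 3 m y + 1`. -/
noncomputable def markoffDelta (m : ℝ) : ℝ := (3 * m - √(9 * m ^ 2 - 4)) / 2

section markoffDelta

variable {m : ℝ}

lemma sq_sqrt_nine_mul_sq_sub_four (hm : 1 ≤ m) : √(9 * m ^ 2 - 4) ^ 2 = 9 * m ^ 2 - 4 :=
  sq_sqrt (by nlinarith)

lemma markoffDelta_pos (hm : 0 < m) : 0 < markoffDelta m := by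
  have : √(9 * m ^ 2 - 4) < 3 * m := (sqrt_lt' (by positivity)).2 (by linarith)
  unfold markoffDelta
  linarith

lemma markoffDelta_le_half (hm : 1 ≤ m) : markoffDelta m ≤ 1 / 2 := by
  have : 3 * m - 1 ≤ √(9 * m ^ 2 - 4) := le_sqrt_of_sq_le (by nlinarith)
  unfold markoffDelta
  linarith

lemma distNearestInt_markoffDelta (hm : 1 ≤ m) :
    distNearestInt (markoffDelta m) = markoffDelta m := by
  have hδ := markoffDelta_pos (by linarith : 0 < m)
  rw [distNearestInt_of_abs_le_half ((abs_of_pos hδ).trans_le (markoffDelta_le_half hm)),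
    abs_of_pos hδ]

lemma eq_neg_markoffDelta_or_of_quadratic (hm : 1 ≤ m) {x : ℝ} (hx : x ^ 2 + 3 * m * x + 1 = 0) :
    x = -markoffDelta m ∨ x = markoffDelta m - 3 * m := by
  have h : (x + markoffDelta m) * (x - (markoffDelta m - 3 * m)) = 0 := by
    unfold markoffDelta
    linear_combination hx - (1 / 4) * sq_sqrt_nine_mul_sq_sub_four hm
  rcases mul_eq_zero.1 h with h | h
  · exact .inl (by linarith)
  · exact .inr (by linarith)

lemma mul_markoffDelta (hm : 1 ≤ m) :
    m * markoffDelta m = 2 / (3 + √(9 - 4 / m ^ 2)) := by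
  have hm₀ : 0 < m := by linarith
  have hsqrt : √(9 - 4 / m ^ 2) = √(9 * m ^ 2 - 4) / m := by
    rw [show 9 - 4 / m ^ 2 = (9 * m ^ 2 - 4) / m ^ 2 by field_simp, sqrt_div' _ (by positivity),
      sqrt_sq hm₀.le]
  have hs := sq_sqrt_nine_mul_sq_sub_four hm
  rw [hsqrt, eq_div_iff (by positivity)]
  unfold markoffDelta
  set s := √(9 * m ^ 2 - 4)
  field_simp
  linear_combination -hs

end markoffDelta

lemma IsMarkoffFormRoot.sq_add_three_mul_add_one_eq_zero {m u v : ℤ} {α : ℝ}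
    (hα : IsMarkoffFormRoot m u v α) (hv : m * v = u ^ 2 + 1) :
    (m * α - u) ^ 2 + 3 * m * (m * α - u) + 1 = 0 := by
  have hv : (m : ℝ) * v = u ^ 2 + 1 := by exact_mod_cast hv
  unfold IsMarkoffFormRoot at hα
  linear_combination m * hα - hv

theorem markoff_root_dist_general (m m₁ m₂ u v : ℤ) (θ α : ℝ)
    (hM : IsMarkoffTriple m m₁ m₂)
    (hv : m * v = u ^ 2 + 1)
    (hα : IsMarkoffFormRoot m u v α) (hequiv : PMEquiv θ α) :
    (m : ℝ) * distNearestInt (m * θ) = 2 / (3 + Real.sqrt (9 - 4 / (m : ℝ) ^ 2)) := by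
  obtain ⟨hm₂, hm₂₁, hm₁, -⟩ := hM
  have hm : (1 : ℝ) ≤ m := by exact_mod_cast hm₂.trans (hm₂₁.trans hm₁)
  have hx := hα.sq_add_three_mul_add_one_eq_zero hv
  rw [hequiv.distNearestInt_intCast_mul, ← mul_markoffDelta hm, ← distNearestInt_markoffDelta hm]
  congr 1
  rcases eq_neg_markoffDelta_or_of_quadratic hm hx with h | h
  · rw [show (m : ℝ) * α = u + -markoffDelta m by linarith, distNearestInt_intCast_add,
      distNearestInt_neg]
  · rw [show (m : ℝ) * α = ((u - 3 * m : ℤ) : ℝ) + markoffDelta m by push_cast; linarith,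
      distNearestInt_intCast_add]

/-- If θ is irrational and ± equivalent to a root of the Markoff form equation
`f_m(x,1) = 0`, then `m·‖mθ‖ = 2/(3 + √(9 − 4m⁻²))`. -/
theorem markoff_root_dist (m m₁ m₂ u v : ℤ) (θ α : ℝ)
    (hM : IsMarkoffTriple m m₁ m₂) (hu : IsMarkoffU m m₁ m₂ u)
    (hv : m * v = u ^ 2 + 1) (hθ : Irrational θ)
    (hα : IsMarkoffFormRoot m u v α) (hequiv : PMEquiv θ α) :
    (m : ℝ) * distNearestInt (m * θ) = 2 / (3 + Real.sqrt (9 - 4 / (m : ℝ) ^ 2)) :=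
  markoff_root_dist_general m m₁ m₂ u v θ α hM hv hα hequiv
end

section
/- Let m > 2, u, v be positive integers and let S = s₁, …, s_k be a finite symmetric sequence of positive integers (i.e. s_i = s_{k+1−i} for all i) such that v/u = [0; 2, S] and u/m = [0; 2, S, 2]. Let β be the negative root of m·x² + (3m − 2u)·x + (v − 3u) = 0. Then −β − 2 = [0; overline{1, 1, S, 2, 2}], i.e. −β − 2 equals the value of the purely periodic continued fraction with repeating block 1, 1, s₁, …, s_k, 2, 2. -/
/-!
Let `!![P, Q; Q, R]` be the product of the matrices `!![s, 1; 1, 0]` over the entries of `S`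
(symmetric because `S` is a palindrome). The two continued fractions for `v / u` and `u / m`
force `(m, u, v)` to be proportional to `(4P + 4Q + R, 2P + Q, P)`, and the substitution
`β = -2 - x` turns the Markoff quadratic into `(4P+4Q+R) x² + (8P+6Q+R) x - (5P+7Q+2R) = 0`.
Its root with `x > -2` is positive, and the equation says precisely that `1 / x` is a fixed
point of the Möbius map `s ↦ [1; 1, S, 2, 2, s]`. A periodic continued fraction converges to
every positive fixed point of its block, since the `n`-th convergent is within `1 / Fₙ` of it.
-/

open Filter Topology Matrix Function

noncomputable def cfMatrix (l : List ℝ) : Matrix (Fin 2) (Fin 2) ℝ :=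
  (l.map fun a => !![a, 1; 1, 0]).prod

/-- `cfValTail l s = [l₀; l₁, …, lₙ, s]`, the continued fraction whose last entry is `s`. -/
noncomputable def cfValTail (l : List ℝ) (s : ℝ) : ℝ :=
  l.foldr (fun a x => a + 1 / x) s

section ContinuedFraction

variable {l : List ℝ} {a s : ℝ}

@[simp] lemma cfMatrix_nil : cfMatrix [] = 1 := rfl

@[simp] lemma cfMatrix_cons : cfMatrix (a :: l) = !![a, 1; 1, 0] * cfMatrix l := by
  simp [cfMatrix]

@[simp] lemma cfMatrix_append (l' : List ℝ) : cfMatrix (l ++ l') = cfMatrix l * cfMatrix l' := by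
  simp [cfMatrix]

lemma cfMatrix_singleton : cfMatrix [a] = !![a, 1; 1, 0] := by
  simp [cfMatrix]

@[simp] lemma cfMatrix_cons_zero_zero :
    cfMatrix (a :: l) 0 0 = a * cfMatrix l 0 0 + cfMatrix l 1 0 := by
  simp [mul_apply, Fin.sum_univ_two]

@[simp] lemma cfMatrix_cons_zero_one :
    cfMatrix (a :: l) 0 1 = a * cfMatrix l 0 1 + cfMatrix l 1 1 := by
  simp [mul_apply, Fin.sum_univ_two]

@[simp] lemma cfMatrix_cons_one_zero : cfMatrix (a :: l) 1 0 = cfMatrix l 0 0 := by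
  simp [mul_apply, Fin.sum_univ_two]

@[simp] lemma cfMatrix_cons_one_one : cfMatrix (a :: l) 1 1 = cfMatrix l 0 1 := by
  simp [mul_apply, Fin.sum_univ_two]

lemma transpose_cfMatrix (l : List ℝ) : (cfMatrix l)ᵀ = cfMatrix l.reverse := by
  induction l with
  | nil => simp
  | cons a l ih =>
    rw [List.reverse_cons, cfMatrix_append, ← ih, cfMatrix_cons, transpose_mul,
      cfMatrix_singleton]
    congr 1
    ext i j
    fin_cases i <;> fin_cases j <;> rfl

lemma cfMatrix_one_zero_eq_of_reverse_eq (h : l.reverse = l) :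
    cfMatrix l 1 0 = cfMatrix l 0 1 := by
  rw [← transpose_apply (cfMatrix l), transpose_cfMatrix, h]

lemma det_cfMatrix (l : List ℝ) : (cfMatrix l).det = (-1) ^ l.length := by
  induction l with
  | nil => simp
  | cons a l ih =>
    rw [cfMatrix_cons, det_mul, ih, det_fin_two_of, List.length_cons, pow_succ']
    ring

lemma cfMatrix_nonneg (hl : ∀ a ∈ l, 1 ≤ a) :
    1 ≤ cfMatrix l 0 0 ∧ 0 ≤ cfMatrix l 0 1 ∧ 0 ≤ cfMatrix l 1 0 ∧
      0 ≤ cfMatrix l 1 1 := by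
  induction l with
  | nil => simp
  | cons a l ih =>
    obtain ⟨ha, hl⟩ := List.forall_mem_cons.1 hl
    obtain ⟨h00, h01, h10, h11⟩ := ih hl
    simp only [cfMatrix_cons_zero_zero, cfMatrix_cons_zero_one, cfMatrix_cons_one_zero,
      cfMatrix_cons_one_one]
    refine ⟨?_, ?_, ?_, ?_⟩ <;> nlinarith

lemma fib_le_cfMatrix (hl : ∀ a ∈ l, 1 ≤ a) :
    (Nat.fib (l.length + 1) : ℝ) ≤ cfMatrix l 0 0 ∧
      (Nat.fib l.length : ℝ) ≤ cfMatrix l 1 0 := by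
  induction l with
  | nil => simp
  | cons a l ih =>
    obtain ⟨ha, hl⟩ := List.forall_mem_cons.1 hl
    obtain ⟨h0, h1⟩ := ih hl
    have h00 := (cfMatrix_nonneg hl).1
    simp only [cfMatrix_cons_zero_zero, cfMatrix_cons_one_zero, List.length_cons,
      Nat.fib_add_two, Nat.cast_add]
    constructor <;> nlinarith

lemma cfMatrix_denom_pos (hl : ∀ a ∈ l, 1 ≤ a) (hs : 0 < s) :
    0 < cfMatrix l 1 0 * s + cfMatrix l 1 1 := by
  cases l with
  | nil => simp
  | cons a l =>
    obtain ⟨h00, h01, -, -⟩ := cfMatrix_nonneg (List.forall_mem_cons.1 hl).2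
    rw [cfMatrix_cons_one_zero, cfMatrix_cons_one_one]
    nlinarith

@[simp] lemma cfValTail_nil : cfValTail [] s = s := rfl

@[simp] lemma cfValTail_cons : cfValTail (a :: l) s = a + 1 / cfValTail l s := rfl

lemma cfValTail_append (l' : List ℝ) : cfValTail (l ++ l') s = cfValTail l (cfValTail l' s) :=
  List.foldr_append

lemma cfValTail_pos (hl : ∀ a ∈ l, 0 ≤ a) (hs : 0 < s) : 0 < cfValTail l s := by
  induction l with
  | nil => exact hs
  | cons a l ih =>
    obtain ⟨ha, hl⟩ := List.forall_mem_cons.1 hl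
    have := ih hl
    rw [cfValTail_cons]
    positivity

lemma cfVal_eq_div (hl : ∀ a ∈ l, 1 ≤ a) : cfVal l = cfMatrix l 0 0 / cfMatrix l 1 0 := by
  induction l with
  | nil => simp [cfVal]
  | cons a l ih =>
    have hl := (List.forall_mem_cons.1 hl).2
    have h00 := (cfMatrix_nonneg hl).1
    rw [cfVal, ih hl, cfMatrix_cons_zero_zero, cfMatrix_cons_one_zero]
    field_simp

lemma cfValTail_eq_div (hl : ∀ a ∈ l, 1 ≤ a) (hs : 0 < s) :
    cfValTail l s =
      (cfMatrix l 0 0 * s + cfMatrix l 0 1) / (cfMatrix l 1 0 * s + cfMatrix l 1 1) := by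
  induction l with
  | nil => simp
  | cons a l ih =>
    have hl := (List.forall_mem_cons.1 hl).2
    obtain ⟨h00, h01, -, -⟩ := cfMatrix_nonneg hl
    have hnum : 0 < cfMatrix l 0 0 * s + cfMatrix l 0 1 := by nlinarith
    rw [cfValTail_cons, ih hl]
    simp only [cfMatrix_cons_zero_zero, cfMatrix_cons_zero_one, cfMatrix_cons_one_zero,
      cfMatrix_cons_one_one]
    field_simp
    ring

lemma abs_cfVal_sub_cfValTail_le (hl : ∀ a ∈ l, 1 ≤ a) (hne : l ≠ []) (hs : 1 ≤ s) :
    |cfVal l - cfValTail l s| ≤ (Nat.fib l.length : ℝ)⁻¹ := by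
  obtain ⟨-, h01, h10, h11⟩ := cfMatrix_nonneg hl
  have hfib : (1 : ℝ) ≤ Nat.fib l.length := by
    exact_mod_cast Nat.fib_pos.2 (List.length_pos_iff.2 hne)
  have hq := (fib_le_cfMatrix hl).2
  have hden : 1 ≤ cfMatrix l 1 0 * s + cfMatrix l 1 1 := by nlinarith
  have hnum : cfMatrix l 0 0 * (cfMatrix l 1 0 * s + cfMatrix l 1 1) -
      cfMatrix l 1 0 * (cfMatrix l 0 0 * s + cfMatrix l 0 1) = (-1) ^ l.length := by
    rw [← det_cfMatrix, det_fin_two]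
    ring
  rw [cfVal_eq_div hl, cfValTail_eq_div hl (by linarith),
    div_sub_div _ _ (by linarith) (by linarith), hnum, abs_div, abs_pow, abs_neg, abs_one,
    one_pow, abs_of_pos (by nlinarith), ← one_div]
  gcongr
  nlinarith

lemma tendsto_inv_fib_atTop : Tendsto (fun n => (Nat.fib n : ℝ)⁻¹) atTop (𝓝 0) := by
  have h : Tendsto (fun n => Nat.fib (n + 2)) atTop atTop :=
    Nat.fib_add_two_strictMono.tendsto_atTop
  exact (tendsto_natCast_atTop_atTop.comp ((tendsto_add_atTop_iff_nat 2).1 h)).inv_tendsto_atTop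

theorem tendsto_cfVal_of_tails {b t : ℕ → ℝ} (hb : ∀ n, 1 ≤ b n) (ht : ∀ n, 0 < t n)
    (hrec : ∀ n, t n = b n + 1 / t (n + 1)) :
    Tendsto (fun n => cfVal ((List.range n).map b)) atTop (𝓝 (t 0)) := by
  have htail : ∀ n, t 0 = cfValTail ((List.range n).map b) (t n) := by
    intro n
    induction n with
    | zero => rfl
    | succ n ih =>
      rw [ih, List.range_succ, List.map_append, cfValTail_append, List.map_singleton,
        cfValTail_cons, cfValTail_nil, ← hrec]
  have herr : ∀ n, 1 ≤ n →
      |cfVal ((List.range n).map b) - t 0| ≤ (Nat.fib n : ℝ)⁻¹ := by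
    intro n hn
    have ht1 : 1 ≤ t n := hrec n ▸ le_add_of_le_of_nonneg (hb n) (one_div_pos.2 (ht _)).le
    have hne : (List.range n).map b ≠ [] := by simpa using Nat.one_le_iff_ne_zero.1 hn
    rw [htail n]
    simpa using abs_cfVal_sub_cfValTail_le (List.forall_mem_map.2 fun i _ => hb i) hne ht1
  rw [← tendsto_sub_nhds_zero_iff]
  refine squeeze_zero_norm' ?_ tendsto_inv_fib_atTop
  filter_upwards [eventually_ge_atTop 1] with n hn
  exact herr n hn

theorem tendsto_cfVal_periodic (hl : ∀ a ∈ l, 1 ≤ a) (hne : l ≠ []) (hs : 0 < s)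
    (hfix : IsFixedPt (cfValTail l) s) :
    Tendsto (fun n => cfVal ((List.range n).map fun i => l.getD (i % l.length) 0)) atTop
      (𝓝 s) := by
  have hp : 0 < l.length := List.length_pos_iff.2 hne
  have hdrop : ∀ k (hk : k < l.length),
      cfValTail (l.drop k) s = l[k] + 1 / cfValTail (l.drop ((k + 1) % l.length)) s := by
    intro k hk
    rw [List.drop_eq_getElem_cons hk, cfValTail_cons]
    rcases (Nat.add_one_le_of_lt hk).lt_or_eq with h | h
    · rw [Nat.mod_eq_of_lt h]
    · rw [h, Nat.mod_self, List.drop_length, List.drop_zero, cfValTail_nil, hfix.eq]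
  have := tendsto_cfVal_of_tails (b := fun i => l.getD (i % l.length) 0)
    (t := fun n => cfValTail (l.drop (n % l.length)) s)
    (fun n => by rw [List.getD_eq_getElem _ _ (Nat.mod_lt n hp)]; exact hl _ (List.getElem_mem _))
    (fun n => cfValTail_pos (fun a ha => by linarith [hl a (List.mem_of_mem_drop ha)]) hs)
    (fun n => by
      simp only [List.getD_eq_getElem _ _ (Nat.mod_lt n hp), ← Nat.mod_add_mod n l.length 1]
      exact hdrop _ (Nat.mod_lt n hp))
  simpa only [Nat.zero_mod, List.drop_zero, hfix.eq] using this

theorem cfInfVal_zero_cons_eq_inv {b : ℕ → ℝ}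
    (h : Tendsto (fun n => cfVal ((List.range n).map b)) atTop (𝓝 s)) (hs : s ≠ 0) :
    cfInfVal (fun n => if n = 0 then 0 else b (n - 1)) = s⁻¹ := by
  refine Tendsto.limUnder_eq ?_
  convert h.inv₀ hs using 2 with n
  simp [List.range_succ_eq_map, cfVal, Function.comp_def]

lemma isFixedPt_cfValTail_inv (hl : ∀ a ∈ l, 1 ≤ a) {x : ℝ} (hx : 0 < x)
    (hq : cfMatrix l 0 1 * x ^ 2 + (cfMatrix l 0 0 - cfMatrix l 1 1) * x - cfMatrix l 1 0 = 0) :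
    IsFixedPt (cfValTail l) x⁻¹ := by
  have hden := cfMatrix_denom_pos hl (inv_pos.2 hx)
  rw [IsFixedPt, cfValTail_eq_div hl (inv_pos.2 hx), div_eq_iff hden.ne']
  field_simp
  linear_combination hq

end ContinuedFraction

lemma cfMatrix_markoff_blocks {Sc : List ℝ} {P Q R : ℝ} (hM : cfMatrix Sc = !![P, Q; Q, R]) :
    cfMatrix (2 :: Sc) = !![2 * P + Q, 2 * Q + R; P, Q] ∧
    cfMatrix (2 :: (Sc ++ [2])) = !![4 * P + 4 * Q + R, 2 * P + Q; 2 * P + Q, P] ∧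
    cfMatrix (1 :: 1 :: (Sc ++ [2, 2])) =
      !![10 * P + 9 * Q + 2 * R, 4 * P + 4 * Q + R; 5 * P + 7 * Q + 2 * R, 2 * P + 3 * Q + R] := by
  simp only [cfMatrix_cons, cfMatrix_append, cfMatrix_nil, hM, mul_fin_two, mul_one]
  refine ⟨?_, ?_, ?_⟩ <;> ext i j <;> fin_cases i <;> fin_cases j <;> simp <;> ring

lemma markoff_quadratic_neg_sub_two {m u v P Q R β : ℝ}
    (hP : 0 < P) (hQ : 0 ≤ Q) (hR : 0 ≤ R)
    (h1 : v / u = P / (2 * P + Q)) (h2 : u / m = (2 * P + Q) / (4 * P + 4 * Q + R))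
    (hβ : m * β ^ 2 + (3 * m - 2 * u) * β + (v - 3 * u) = 0) :
    (4 * P + 4 * Q + R) * (-β - 2) ^ 2 + (8 * P + 6 * Q + R) * (-β - 2) -
      (5 * P + 7 * Q + 2 * R) = 0 := by
  have hu : u ≠ 0 := by
    rintro rfl
    rw [div_zero, eq_comm] at h1
    exact (div_pos hP (by linarith)).ne' h1
  have hm : m ≠ 0 := by
    rintro rfl
    rw [div_zero, eq_comm] at h2
    exact (div_pos (by linarith) (by linarith)).ne' h2
  rw [div_eq_div_iff hu (by linarith)] at h1
  rw [div_eq_div_iff hm (by linarith)] at h2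
  have hmv : m * P = v * (4 * P + 4 * Q + R) := by
    refine mul_left_cancel₀ hu ?_
    linear_combination -m * h1 - v * h2
  refine mul_left_cancel₀ hm ?_
  linear_combination (4 * P + 4 * Q + R) * hβ + (2 * β + 3) * h2 + hmv

lemma pos_of_markoff_quadratic {P Q R x : ℝ} (hP : 0 < P) (hQ : 0 ≤ Q) (hR : 0 ≤ R)
    (hx : (4 * P + 4 * Q + R) * x ^ 2 + (8 * P + 6 * Q + R) * x - (5 * P + 7 * Q + 2 * R) = 0)
    (hx2 : -2 < x) : 0 < x := by
  by_contra! h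
  -- the quadratic is convex and negative at both `-2` and `0`
  nlinarith [mul_nonneg (mul_nonneg (by linarith : (0:ℝ) ≤ x + 2) (neg_nonneg.2 h))
    (by linarith : (0:ℝ) ≤ 4 * P + 4 * Q + R)]

lemma isFixedPt_inv_neg_sub_two {Sc : List ℝ} (hSc : ∀ a ∈ Sc, 1 ≤ a)
    (hsym : Sc.reverse = Sc) {m u v β : ℝ} (h1 : v / u = cfVal (0 :: 2 :: Sc))
    (h2 : u / m = cfVal (0 :: 2 :: (Sc ++ [2])))
    (hβ : m * β ^ 2 + (3 * m - 2 * u) * β + (v - 3 * u) = 0) (hβneg : β < 0) :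
    0 < -β - 2 ∧ IsFixedPt (cfValTail (1 :: 1 :: (Sc ++ [2, 2]))) (-β - 2)⁻¹ := by
  obtain ⟨hP, hQ, -, hR⟩ := cfMatrix_nonneg hSc
  have hM : cfMatrix Sc = !![cfMatrix Sc 0 0, cfMatrix Sc 0 1; cfMatrix Sc 0 1, cfMatrix Sc 1 1] :=
    (eta_fin_two _).trans (by rw [cfMatrix_one_zero_eq_of_reverse_eq hsym])
  obtain ⟨h2S, h2S2, hBl⟩ := cfMatrix_markoff_blocks hM
  rw [cfVal, cfVal_eq_div (by simpa [or_imp, forall_and] using hSc), h2S] at h1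
  rw [cfVal, cfVal_eq_div (by simpa [or_imp, forall_and] using hSc), h2S2] at h2
  simp only [of_apply, cons_val', cons_val_zero, cons_val_one, empty_val', cons_val_fin_one,
    zero_add, one_div_div] at h1 h2
  have hq := markoff_quadratic_neg_sub_two (by linarith) hQ hR h1 h2 hβ
  have hx := pos_of_markoff_quadratic (by linarith) hQ hR hq (by linarith)
  refine ⟨hx, isFixedPt_cfValTail_inv (by simpa [or_imp, forall_and] using hSc) hx ?_⟩
  simp only [hBl, of_apply, cons_val', cons_val_zero, cons_val_one, empty_val', cons_val_fin_one]
  linear_combination hq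

theorem neg_root_cf_general (m u v : ℕ)
    (S : List ℕ) (hSpos : ∀ x ∈ S, 0 < x) (hSsym : S.reverse = S)
    (h1 : (v : ℝ) / u = cfVal (0 :: 2 :: S.map (fun x => (x : ℝ))))
    (h2 : (u : ℝ) / m = cfVal (0 :: 2 :: (S.map (fun x => (x : ℝ)) ++ [2])))
    (β : ℝ) (hβ : (m : ℝ) * β ^ 2 + (3 * m - 2 * u) * β + ((v : ℝ) - 3 * u) = 0)
    (hβneg : β < 0) :
    -β - 2 = cfInfVal (fun n => if n = 0 then (0 : ℝ)
      else (((1 :: 1 :: (S ++ [2, 2])).getD ((n - 1) % (S.length + 4)) 0 : ℕ) : ℝ)) := by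
  -- `S.map (fun x => (x : ℝ))` elaborates as `List.map id` of the monadic lift of `S`.
  have hcast : S.map (fun x => (x : ℝ)) = S.map (Nat.cast : ℕ → ℝ) :=
    (List.map_id _).trans (List.flatMap_pure_eq_map _ S)
  rw [hcast] at h1 h2
  have hSc : ∀ a ∈ S.map (Nat.cast : ℕ → ℝ), 1 ≤ a := by
    simpa [Nat.one_le_iff_ne_zero, Nat.pos_iff_ne_zero] using hSpos
  obtain ⟨hx, hfix⟩ :=
    isFixedPt_inv_neg_sub_two hSc (by rw [← List.map_reverse, hSsym]) h1 h2 hβ hβneg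
  set Bl := (1 :: 1 :: (S ++ [2, 2])).map (Nat.cast : ℕ → ℝ)
  rw [show 1 :: 1 :: (S.map Nat.cast ++ [2, 2]) = Bl by simp [Bl]] at hfix
  have hlim := tendsto_cfVal_periodic (by simpa [Bl, or_imp, forall_and] using hSc)
    (by simp [Bl]) (inv_pos.2 hx) hfix
  rw [← inv_inv (-β - 2), ← cfInfVal_zero_cons_eq_inv hlim (inv_ne_zero hx.ne')]
  congr with n
  split_ifs
  · rfl
  · rw [← Nat.cast_zero, List.getD_map]
    simp [Bl]

/-- Lemma 2.1, first part: `−β − 2 = [0; overline{1,1,S,2,2}]`. -/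
theorem neg_root_cf (m u v : ℕ) (hm : 2 < m) (hu : 0 < u) (hv : 0 < v)
    (S : List ℕ) (hSpos : ∀ x ∈ S, 0 < x) (hSsym : S.reverse = S)
    (h1 : (v : ℝ) / u = cfVal (0 :: 2 :: S.map (fun x => (x : ℝ))))
    (h2 : (u : ℝ) / m = cfVal (0 :: 2 :: (S.map (fun x => (x : ℝ)) ++ [2])))
    (β : ℝ) (hβ : (m : ℝ) * β ^ 2 + (3 * m - 2 * u) * β + ((v : ℝ) - 3 * u) = 0)
    (hβneg : β < 0) :
    -β - 2 = cfInfVal (fun n => if n = 0 then (0 : ℝ)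
      else (((1 :: 1 :: (S ++ [2, 2])).getD ((n - 1) % (S.length + 4)) 0 : ℕ) : ℝ)) :=
  neg_root_cf_general m u v S hSpos hSsym h1 h2 β hβ hβneg
end

section
/- For each even integer n ≥ 2 and all real numbers x ≥ 1 and y ≥ 1: the inequality [2; 1_n, x] + [0; 2, 1_{n−2}, y] ≤ 3 holds if and only if x ≥ y, and equality [2; 1_n, x] + [0; 2, 1_{n−2}, y] = 3 holds if and only if x = y. -/
open Nat

theorem Nat.fib_add_one_mul_fib_add_two_sub_fib_mul_fib_add_three {R : Type*} [CommRing R]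
    (m : ℕ) :
    (fib (m + 1) * fib (m + 2) - fib m * fib (m + 3) : R) = (-1) ^ m := by
  induction m with
  | zero => simp
  | succ k ih =>
    have h2 : (fib (k + 2) : R) = fib k + fib (k + 1) := by rw [fib_add_two, cast_add]
    have h4 : (fib (k + 4) : R) = fib (k + 2) + fib (k + 3) := by rw [fib_add_two, cast_add]
    linear_combination (-1) * ih + (fib (k + 3) : R) * h2 - (fib (k + 1) : R) * h4

theorem fib_add_one_mul_add_fib_pos (k : ℕ) {t : ℝ} (ht : 0 < t) :
    0 < (fib (k + 1) : ℝ) * t + fib k :=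
  add_pos_of_pos_of_nonneg (mul_pos (by exact_mod_cast fib_pos.2 k.succ_pos) ht) (cast_nonneg _)

/-- The denominator is `F k * t + F (k - 1)`, written so that `k = 0` needs no `F (-1) = 1`. -/
theorem cfVal_replicate_one_append (k : ℕ) {t : ℝ} (ht : 0 < t) :
    cfVal (List.replicate k 1 ++ [t]) =
      (fib (k + 1) * t + fib k) / (fib k * t + fib (k + 1) - fib k) := by
  induction k with
  | zero => simp [cfVal]
  | succ k ih =>
    have hfib : (fib (k + 2) : ℝ) = fib k + fib (k + 1) := by rw [fib_add_two, cast_add]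
    rw [List.replicate_succ, List.cons_append, cfVal, ih, one_div_div, hfib,
      one_add_div (fib_add_one_mul_add_fib_pos k ht).ne']
    ring_nf

theorem cfVal_two_replicate_one_append (m : ℕ) {x : ℝ} (hx : 0 < x) :
    cfVal (2 :: (List.replicate (m + 2) 1 ++ [x])) =
      3 - (fib (m + 1) * x + fib m) / (fib (m + 3) * x + fib (m + 2)) := by
  have h2 : (fib (m + 2) : ℝ) = fib m + fib (m + 1) := by rw [fib_add_two, cast_add]
  have h3 : (fib (m + 3) : ℝ) = fib (m + 1) + fib (m + 2) := by rw [fib_add_two, cast_add]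
  have hsum : (fib (m + 2) * x + fib (m + 3) - fib (m + 2) : ℝ) + (fib (m + 1) * x + fib m) =
      fib (m + 3) * x + fib (m + 2) := by
    linear_combination (1 - x) * h3 - h2
  rw [cfVal, cfVal_replicate_one_append _ hx, one_div_div, eq_sub_iff_add_eq, add_assoc,
    ← add_div, hsum, div_self (fib_add_one_mul_add_fib_pos (m + 2) hx).ne']
  norm_num

theorem cfVal_zero_two_replicate_one_append (m : ℕ) {y : ℝ} (hy : 0 < y) :
    cfVal (0 :: 2 :: (List.replicate m 1 ++ [y])) =
      (fib (m + 1) * y + fib m) / (fib (m + 3) * y + fib (m + 2)) := by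
  have h2 : (fib (m + 2) : ℝ) = fib m + fib (m + 1) := by rw [fib_add_two, cast_add]
  have h3 : (fib (m + 3) : ℝ) = fib (m + 1) + fib (m + 2) := by rw [fib_add_two, cast_add]
  have hsum : 2 * (fib (m + 1) * y + fib m : ℝ) + (fib m * y + fib (m + 1) - fib m) =
      fib (m + 3) * y + fib (m + 2) := by
    linear_combination (-y) * h3 - (y + 1) * h2
  rw [cfVal, cfVal, cfVal_replicate_one_append _ hy, one_div_div,
    add_div' _ _ _ (fib_add_one_mul_add_fib_pos m hy).ne', hsum, one_div_div, zero_add]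

theorem linear_div_sub_linear_div {K : Type*} [Field K] (a b c d x y : K)
    (hx : c * x + d ≠ 0) (hy : c * y + d ≠ 0) :
    (a * y + b) / (c * y + d) - (a * x + b) / (c * x + d) =
      (a * d - b * c) * (y - x) / ((c * x + d) * (c * y + d)) := by
  rw [div_sub_div _ _ hy hx]
  ring

theorem cfVal_two_add_cfVal_zero_two (m : ℕ) {x y : ℝ} (hx : 0 < x) (hy : 0 < y) :
    cfVal (2 :: (List.replicate (m + 2) 1 ++ [x])) +
        cfVal (0 :: 2 :: (List.replicate m 1 ++ [y])) =
      3 + (-1) ^ m * (y - x) /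
        ((fib (m + 3) * x + fib (m + 2)) * (fib (m + 3) * y + fib (m + 2))) := by
  have hdiff := linear_div_sub_linear_div (fib (m + 1) : ℝ) (fib m) (fib (m + 3)) (fib (m + 2))
    x y (fib_add_one_mul_add_fib_pos (m + 2) hx).ne' (fib_add_one_mul_add_fib_pos (m + 2) hy).ne'
  rw [Nat.fib_add_one_mul_fib_add_two_sub_fib_mul_fib_add_three] at hdiff
  rw [cfVal_two_replicate_one_append m hx, cfVal_zero_two_replicate_one_append m hy]
  linear_combination hdiff

/-- Lemma 4.1: for even `n ≥ 2` and reals `x, y ≥ 1`,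
`[2;1_n,x] + [0;2,1_{n−2},y] ≤ 3 ↔ x ≥ y`, with equality iff `x = y`. -/
theorem cf_ineq_lemma (n : ℕ) (hn : 2 ≤ n) (hne : Even n)
    (x y : ℝ) (hx : 1 ≤ x) (hy : 1 ≤ y) :
    (cfVal (2 :: (List.replicate n (1 : ℝ) ++ [x])) +
        cfVal (0 :: 2 :: (List.replicate (n - 2) (1 : ℝ) ++ [y])) ≤ 3 ↔ y ≤ x) ∧
    (cfVal (2 :: (List.replicate n (1 : ℝ) ++ [x])) +
        cfVal (0 :: 2 :: (List.replicate (n - 2) (1 : ℝ) ++ [y])) = 3 ↔ x = y) := by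
  obtain ⟨m, rfl⟩ := Nat.exists_eq_add_of_le' hn
  have hm : Even m := (Nat.even_add.1 hne).2 even_two
  have hx₀ : 0 < x := by linarith
  have hy₀ : 0 < y := by linarith
  have hP := mul_pos (fib_add_one_mul_add_fib_pos (m + 2) hx₀)
    (fib_add_one_mul_add_fib_pos (m + 2) hy₀)
  rw [Nat.add_sub_cancel, cfVal_two_add_cfVal_zero_two m hx₀ hy₀, hm.neg_one_pow, one_mul]
  constructor
  · rw [add_le_iff_nonpos_right, div_le_iff₀ hP, zero_mul, sub_nonpos]
  · rw [add_eq_left, div_eq_zero_iff, or_iff_left hP.ne', sub_eq_zero, eq_comm]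
end

section
/- Let r(1), r(2), … be a sequence of nonnegative integers satisfying conditions (A), (B) and (C₀₁) (i.e. a sequence in M₀₁), and let A be the sequence of positive integers of form (4.1) built from r. Then μ_n(A) < 3 for all n ≥ 1. -/
/-!
Write `A = form41 r` as the concatenation of the blocks `2, 1, …, 1, 2` (with `2 r(i)` ones).
Where `A n = 1`, `μ_n ≤ 1 + [1; w] ≤ 1 + 7/4`. Otherwise `n` is the first or the last position
of a block, and `μ_n` is `[0; 2, T] + [2; …]` or `[0; 1, 1, T] + [2; 2, …]`; since
`[0; 2, T] + [0; 1, 1, T] = 1`, the bound `μ_n < 3` becomes a comparison between the finite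
continued fraction made of the blocks of `r(i) ± 1, r(i-1), …, r(0)` and the infinite one made
of the blocks of `r(i+1), r(i+2), …`. Blocks have even length, so that comparison is decided by
the lexicographic order of the two sequences of `r`-values, and (A), (B), (C₀₁) say precisely
that it goes the right way.
-/

open Filter Topology Set

/-- `cfMap l x = [l₀; l₁, …, lₖ, x]`. Since `1 / 0 = 0` in Lean, `cfMap l 0` is the finite
continued fraction `[l₀; l₁, …, lₖ]`. -/
noncomputable def cfMap (l : List ℕ) (x : ℝ) : ℝ := l.foldr (fun a t => a + 1 / t) x

@[simp] lemma cfMap_nil (x : ℝ) : cfMap [] x = x := rfl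

@[simp] lemma cfMap_cons (a : ℕ) (l : List ℕ) (x : ℝ) :
    cfMap (a :: l) x = a + 1 / cfMap l x := rfl

lemma cfMap_append (l₁ l₂ : List ℕ) (x : ℝ) : cfMap (l₁ ++ l₂) x = cfMap l₁ (cfMap l₂ x) := by
  simp [cfMap]

lemma cfVal_map_natCast (l : List ℕ) : cfVal (l.map (↑)) = cfMap l 0 := by
  induction l with
  | nil => rfl
  | cons a l ih => simp [cfVal, ih]

lemma cfMap_nonneg (l : List ℕ) {x : ℝ} (hx : 0 ≤ x) : 0 ≤ cfMap l x := by
  induction l with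
  | nil => exact hx
  | cons a l ih => simp only [cfMap_cons]; positivity

lemma cfMap_pos (l : List ℕ) {x : ℝ} (hx : 0 < x) : 0 < cfMap l x := by
  induction l with
  | nil => exact hx
  | cons a l ih => simp only [cfMap_cons]; positivity

lemma le_cfMap_cons (a : ℕ) (l : List ℕ) {x : ℝ} (hx : 0 ≤ x) : (a : ℝ) ≤ cfMap (a :: l) x := by
  have := cfMap_nonneg l hx
  simp only [cfMap_cons, le_add_iff_nonneg_right]
  positivity

lemma lt_cfMap_cons (a : ℕ) (l : List ℕ) {x : ℝ} (hx : 0 < x) : (a : ℝ) < cfMap (a :: l) x := by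
  have := cfMap_pos l hx
  simp only [cfMap_cons, lt_add_iff_pos_right]
  positivity

lemma strictAntiOn_add_one_div (a : ℝ) : StrictAntiOn (fun t : ℝ => a + 1 / t) (Ioi 0) :=
  fun _ hx _ _ hxy => by dsimp only; linarith [one_div_lt_one_div_of_lt hx hxy]

lemma cfMap_strictMonoOn_strictAntiOn (l : List ℕ) :
    (Even l.length → StrictMonoOn (cfMap l) (Ioi 0)) ∧
      (Odd l.length → StrictAntiOn (cfMap l) (Ioi 0)) := by
  induction l with
  | nil => exact ⟨fun _ _ _ _ _ h => h, fun h => absurd h (by simp)⟩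
  | cons a l ih =>
    have hmaps : MapsTo (cfMap l) (Ioi 0) (Ioi 0) := fun x hx => cfMap_pos l hx
    refine ⟨fun h => ?_, fun h => ?_⟩
    · exact (strictAntiOn_add_one_div a).comp (ih.2 (by simpa [Nat.even_add_one] using h)) hmaps
    · exact (strictAntiOn_add_one_div a).comp_strictMonoOn
        (ih.1 (by simpa [Nat.odd_add_one] using h)) hmaps

lemma continuousAt_cfMap (l : List ℕ) {x : ℝ} (hx : 0 < x) : ContinuousAt (cfMap l) x := by
  induction l with
  | nil => exact continuousAt_id
  | cons a l ih =>
    exact continuousAt_const.add (continuousAt_const.div ih (cfMap_pos l hx).ne')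

lemma cfMap_singleton_mem_Icc {a : ℕ} (ha : a ∈ Icc 1 2) {x : ℝ} (hx : x ∈ Icc 1 3) :
    cfMap [a] x ∈ Icc (4 / 3) 3 := by
  obtain ⟨ha₁, ha₂⟩ := ha
  obtain ⟨hx₁, hx₂⟩ := hx
  have ha₁' : (1 : ℝ) ≤ a := by exact_mod_cast ha₁
  have ha₂' : (a : ℝ) ≤ 2 := by exact_mod_cast ha₂
  have h₁ : 1 / 3 ≤ 1 / x := one_div_le_one_div_of_le (by linarith) hx₂
  have h₂ : 1 / x ≤ 1 := by rw [div_le_one (by linarith)]; exact hx₁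
  simp only [cfMap_cons, cfMap_nil]
  constructor <;> linarith

lemma cfMap_mem_Icc {l : List ℕ} (hl : ∀ a ∈ l, a ∈ Icc 1 2) {x : ℝ} (hx : x ∈ Icc (4 / 3) 3) :
    cfMap l x ∈ Icc (4 / 3) 3 := by
  induction l with
  | nil => exact hx
  | cons a l ih =>
    exact cfMap_singleton_mem_Icc (hl a List.mem_cons_self)
      (Icc_subset_Icc (by norm_num) le_rfl (ih fun b hb => hl b (List.mem_cons_of_mem a hb)))

/-- On `[4/3, 3]` every map `t ↦ a + 1 / t` with `a ∈ [1, 2]` is a `9/16`-contraction. -/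
lemma abs_cfMap_sub_le {l : List ℕ} (hl : ∀ a ∈ l, a ∈ Icc 1 2) {x y : ℝ}
    (hx : x ∈ Icc (4 / 3) 3) (hy : y ∈ Icc (4 / 3) 3) :
    |cfMap l x - cfMap l y| ≤ (9 / 16) ^ l.length * |x - y| := by
  induction l with
  | nil => simp
  | cons a l ih =>
    have hl' : ∀ b ∈ l, b ∈ Icc 1 2 := fun b hb => hl b (List.mem_cons_of_mem a hb)
    obtain ⟨hX, -⟩ := cfMap_mem_Icc hl' hx
    obtain ⟨hY, -⟩ := cfMap_mem_Icc hl' hy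
    have hXY : 16 / 9 ≤ cfMap l x * cfMap l y := by nlinarith
    have hXY₀ : 0 < cfMap l x * cfMap l y := by linarith
    have key : cfMap (a :: l) x - cfMap (a :: l) y =
        (cfMap l y - cfMap l x) / (cfMap l x * cfMap l y) := by
      simp only [cfMap_cons]; field_simp; ring
    calc |cfMap (a :: l) x - cfMap (a :: l) y|
        = |cfMap l x - cfMap l y| / (cfMap l x * cfMap l y) := by
          rw [key, abs_div, abs_of_pos hXY₀, abs_sub_comm]
      _ ≤ 9 / 16 * |cfMap l x - cfMap l y| := by
          rw [div_le_iff₀ hXY₀]; nlinarith [abs_nonneg (cfMap l x - cfMap l y)]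
      _ ≤ (9 / 16) ^ (a :: l).length * |x - y| := by
          rw [List.length_cons, pow_succ]; nlinarith [ih hl']

lemma inv_cfMap_two_add_inv_cfMap_one_one {t : ℝ} (ht : 0 < t) :
    1 / cfMap [2] t + 1 / cfMap [1, 1] t = 1 := by
  simp only [cfMap_cons, cfMap_nil]
  field_simp
  ring

noncomputable def cfStreamVal (w : ℕ → ℕ) : ℝ := cfInfVal fun k => (w k : ℝ)

lemma cfMap_map_range_add (w : ℕ → ℕ) (m n : ℕ) (x : ℝ) :
    cfMap ((List.range (m + n)).map w) x =
      cfMap ((List.range m).map w) (cfMap ((List.range n).map fun k => w (m + k)) x) := by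
  rw [List.range_add, List.map_append, List.map_map, cfMap_append]
  rfl

lemma cfStreamVal_eq_of_tendsto {w : ℕ → ℕ} {L : ℝ}
    (h : Tendsto (fun n => cfMap ((List.range n).map w) 0) atTop (𝓝 L)) : cfStreamVal w = L := by
  rw [← ((tendsto_add_atTop_iff_nat 1).2 h).limUnder_eq]
  simp only [cfStreamVal, cfInfVal, ← cfVal_map_natCast, List.map_map]
  rfl

lemma exists_tendsto_cfMap {w : ℕ → ℕ} (hw : ∀ k, w k ∈ Icc 1 2) :
    ∃ L ∈ Icc (4 / 3) 3, Tendsto (fun n => cfMap ((List.range n).map w) 0) atTop (𝓝 L) := by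
  have hw' : ∀ k, (w k : ℝ) ∈ Icc 1 3 := fun k =>
    ⟨by exact_mod_cast (hw k).1, by linarith [show (w k : ℝ) ≤ 2 by exact_mod_cast (hw k).2]⟩
  have hprefix : ∀ n, ∀ a ∈ (List.range n).map w, a ∈ Icc 1 2 := fun n a ha => by
    obtain ⟨k, -, rfl⟩ := List.mem_map.1 ha
    exact hw k
  set x : ℕ → ℝ := fun n => cfMap [w n] (w (n + 1))
  have hx : ∀ n, x n ∈ Icc (4 / 3) 3 := fun n => cfMap_singleton_mem_Icc (hw n) (hw' (n + 1))
  have hu : ∀ n, cfMap ((List.range (n + 2)).map w) 0 = cfMap ((List.range n).map w) (x n) :=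
    fun n => by rw [cfMap_map_range_add]; simp [x, List.range_succ]
  have hu_succ : ∀ n, cfMap ((List.range (n + 3)).map w) 0 =
      cfMap ((List.range n).map w) (cfMap [w n] (x (n + 1))) := fun n => by
    rw [hu, List.range_succ, List.map_append, cfMap_append]; rfl
  have hdist : ∀ n, dist (cfMap ((List.range (n + 2)).map w) 0)
      (cfMap ((List.range (n + 3)).map w) 0) ≤ 5 / 3 * (9 / 16) ^ n := fun n => by
    have hy := cfMap_singleton_mem_Icc (hw n) (Icc_subset_Icc (by norm_num) le_rfl (hx (n + 1)))
    rw [Real.dist_eq, hu, hu_succ]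
    refine (abs_cfMap_sub_le (hprefix n) (hx n) hy).trans ?_
    rw [List.length_map, List.length_range, mul_comm]
    gcongr
    rw [abs_le]; constructor <;> linarith [(hx n).1, (hx n).2, hy.1, hy.2]
  obtain ⟨L, hL⟩ :=
    cauchySeq_tendsto_of_complete (cauchySeq_of_le_geometric _ _ (by norm_num) hdist)
  refine ⟨L, isClosed_Icc.mem_of_tendsto hL (Eventually.of_forall fun n => ?_),
    (tendsto_add_atTop_iff_nat 2).1 hL⟩
  rw [hu]
  exact cfMap_mem_Icc (hprefix n) (hx n)

lemma cfStreamVal_mem_Icc {w : ℕ → ℕ} (hw : ∀ k, w k ∈ Icc 1 2) :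
    cfStreamVal w ∈ Icc (4 / 3) 3 := by
  obtain ⟨L, hL, h⟩ := exists_tendsto_cfMap hw
  rwa [cfStreamVal_eq_of_tendsto h]

lemma cfStreamVal_eq_cfMap {w : ℕ → ℕ} (hw : ∀ k, w k ∈ Icc 1 2) (n : ℕ) :
    cfStreamVal w = cfMap ((List.range n).map w) (cfStreamVal fun k => w (n + k)) := by
  obtain ⟨L, hL, h⟩ := exists_tendsto_cfMap fun k => hw (n + k)
  rw [cfStreamVal_eq_of_tendsto h]
  apply cfStreamVal_eq_of_tendsto
  rw [← tendsto_add_atTop_iff_nat n]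
  simp only [add_comm _ n, cfMap_map_range_add]
  exact (continuousAt_cfMap _ (by linarith [hL.1])).tendsto.comp h

lemma mu_eq (A : ℕ → ℕ) (n : ℕ) :
    mu A n = 1 / cfMap ((List.range n).map A).reverse 0 + cfStreamVal fun k => A (n + k) := by
  have h : (0 : ℝ) :: (List.range n).reverse.map (fun i => (A i : ℝ)) =
      (0 :: ((List.range n).map A).reverse).map (↑) := by
    simp [List.map_reverse]
  rw [mu, h, cfVal_map_natCast, cfMap_cons, Nat.cast_zero, zero_add]
  rfl

lemma map_range_succ_eq_cons (s : ℕ → ℕ) (n : ℕ) :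
    (List.range (n + 1)).map s = s 0 :: (List.range n).map fun i => s (i + 1) := by
  simp [List.range_succ_eq_map]

/-- `form41 r` is the concatenation of the blocks of `r 0, r 1, …`. -/
def form41Block (b : ℕ) : List ℕ := 2 :: List.replicate (2 * b) 1 ++ [2]

def form41Blocks (l : List ℕ) : List ℕ := l.flatMap form41Block

@[simp] lemma form41Block_length (b : ℕ) : (form41Block b).length = 2 * b + 2 := by
  simp [form41Block]

lemma form41Blocks_cons (b : ℕ) (l : List ℕ) :
    form41Blocks (b :: l) = form41Block b ++ form41Blocks l := rfl

lemma form41Block_reverse (b : ℕ) : (form41Block b).reverse = form41Block b := by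
  simp [form41Block]

lemma form41Blocks_reverse (l : List ℕ) : (form41Blocks l).reverse = form41Blocks l.reverse := by
  simp only [form41Blocks, List.reverse_flatMap, Function.comp_def, form41Block_reverse]

lemma form41_add (s : ℕ → ℕ) (k : ℕ) :
    form41 s (2 * s 0 + 2 + k) = form41 (fun i => s (i + 1)) k := by
  rw [form41, dif_neg (by omega), Nat.add_sub_cancel_left]

lemma form41_eq_one (s : ℕ → ℕ) {m : ℕ} (h₁ : 1 ≤ m) (h₂ : m ≤ 2 * s 0) : form41 s m = 1 := by
  rw [form41, dif_pos (by omega), if_neg (by omega), if_pos h₂]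

lemma map_range_form41_of_le (s : ℕ → ℕ) {m : ℕ} (hm : m ≤ 2 * s 0 + 2) :
    (List.range m).map (form41 s) = (form41Block (s 0)).take m := by
  refine List.ext_getElem (by simpa using hm) fun k hk _ => ?_
  simp only [List.length_map, List.length_range] at hk
  simp only [List.getElem_map, List.getElem_range, List.getElem_take]
  rw [form41, dif_pos (by omega)]
  simp only [form41Block, List.getElem_append, List.getElem_cons, List.length_cons,
    List.length_replicate, List.getElem_replicate]
  split_ifs <;> first | rfl | omega

lemma form41_length_form41Blocks_add (s : ℕ → ℕ) (i k : ℕ) :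
    form41 s ((form41Blocks ((List.range i).map s)).length + k) =
      form41 (fun j => s (i + j)) k := by
  induction i generalizing s with
  | zero => simp [form41Blocks]
  | succ i ih =>
    rw [map_range_succ_eq_cons, form41Blocks_cons, List.length_append, form41Block_length,
      add_assoc, form41_add]
    exact (ih _).trans (by simp only [Nat.add_right_comm _ 1])

lemma map_range_form41_length_form41Blocks (s : ℕ → ℕ) (i : ℕ) :
    (List.range (form41Blocks ((List.range i).map s)).length).map (form41 s) =
      form41Blocks ((List.range i).map s) := by
  induction i generalizing s with
  | zero => rfl
  | succ i ih =>
    rw [map_range_succ_eq_cons, form41Blocks_cons, List.length_append, List.range_add,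
      List.map_append, List.map_map, form41Block_length, map_range_form41_of_le s le_rfl,
      List.take_of_length_le (by simp)]
    congr 1
    simpa only [Function.comp_def, form41_add] using ih fun j => s (j + 1)

lemma map_range_form41_length_form41Blocks_add (s : ℕ → ℕ) (i : ℕ) {m : ℕ}
    (hm : m ≤ 2 * s i + 2) :
    (List.range ((form41Blocks ((List.range i).map s)).length + m)).map (form41 s) =
      form41Blocks ((List.range i).map s) ++ (form41Block (s i)).take m := by
  rw [List.range_add, List.map_append, map_range_form41_length_form41Blocks, List.map_map]
  congr 1
  simp only [Function.comp_def, form41_length_form41Blocks_add]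
  exact map_range_form41_of_le _ (by simpa using hm)

lemma form41_mem_Icc (s : ℕ → ℕ) (n : ℕ) : form41 s n ∈ Icc 1 2 := by
  induction n using Nat.strong_induction_on generalizing s with
  | _ n ih =>
    rw [form41]
    split_ifs
    all_goals first | exact ih _ (by omega) _ | norm_num

lemma cfStreamVal_form41 (s : ℕ → ℕ) :
    cfStreamVal (form41 s) =
      cfMap (form41Block (s 0)) (cfStreamVal (form41 fun i => s (i + 1))) := by
  rw [cfStreamVal_eq_cfMap (form41_mem_Icc s) (2 * s 0 + 2), map_range_form41_of_le s le_rfl,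
    ← form41Block_length, List.take_length]
  simp only [form41Block_length, form41_add]

lemma exists_eq_length_form41Blocks_add (r : ℕ → ℕ) (n : ℕ) :
    ∃ i m, n = (form41Blocks ((List.range i).map r)).length + m ∧ m < 2 * r i + 2 := by
  induction n with
  | zero => exact ⟨0, 0, rfl, by omega⟩
  | succ n ih =>
    obtain ⟨i, m, rfl, hm⟩ := ih
    rcases lt_or_ge (m + 1) (2 * r i + 2) with h | h
    · exact ⟨i, m + 1, rfl, h⟩
    · refine ⟨i + 1, 0, ?_, by omega⟩
      simp [List.range_succ, form41Blocks]
      omega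

lemma cfMap_form41Block (b : ℕ) (x : ℝ) :
    cfMap (form41Block b) x = cfMap (2 :: List.replicate (2 * b) 1) (cfMap [2] x) :=
  cfMap_append ..

lemma cfMap_form41Block_strictMonoOn (b : ℕ) : StrictMonoOn (cfMap (form41Block b)) (Ioi 0) :=
  (cfMap_strictMonoOn_strictAntiOn _).1 (by simp [parity_simps])

lemma cfMap_two_replicate_strictAntiOn (b : ℕ) :
    StrictAntiOn (cfMap (2 :: List.replicate (2 * b) 1)) (Ioi 0) :=
  (cfMap_strictMonoOn_strictAntiOn _).2 (by simp)

lemma two_le_cfMap_two {x : ℝ} (hx : 0 ≤ x) : 2 ≤ cfMap [2] x := by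
  exact_mod_cast le_cfMap_cons 2 [] hx

/-- An empty tail acts as an infinite partial quotient. -/
lemma cfMap_form41Block_lt_cfMap_form41Block_zero (b : ℕ) {x : ℝ} (hx : 0 < x) :
    cfMap (form41Block b) x < cfMap (form41Block b) 0 := by
  rw [cfMap_form41Block, cfMap_form41Block]
  refine cfMap_two_replicate_strictAntiOn b (by norm_num [mem_Ioi]) (cfMap_pos [2] hx) ?_
  simp only [cfMap_cons, cfMap_nil, div_zero, add_zero]
  push_cast
  exact lt_add_of_pos_right 2 (by positivity)

lemma cfMap_form41Block_lt_of_lt {a b : ℕ} (hab : a < b) {x y : ℝ} (hx : 0 ≤ x) (hy : 0 ≤ y) :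
    cfMap (form41Block a) x < cfMap (form41Block b) y := by
  obtain ⟨k, rfl⟩ := Nat.exists_eq_add_of_lt hab
  have hb : form41Block (a + k + 1) =
      (2 :: List.replicate (2 * a) 1) ++ (1 :: 1 :: List.replicate (2 * k) 1 ++ [2]) := by
    simp only [form41Block, List.cons_append, List.cons.injEq, true_and]
    rw [show 2 * (a + k + 1) = 2 * a + (2 * k + 2) by ring, List.replicate_add]
    simp [List.replicate_succ]
  have hz : 0 < cfMap [2] y := by linarith [two_le_cfMap_two hy]
  have hlt : 1 < cfMap (1 :: List.replicate (2 * k) 1) (cfMap [2] y) := by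
    exact_mod_cast lt_cfMap_cons 1 _ hz
  rw [cfMap_form41Block, hb, cfMap_append, cfMap_append]
  have hx' : 0 < cfMap [2] x := by linarith [two_le_cfMap_two hx]
  refine cfMap_two_replicate_strictAntiOn a (cfMap_pos _ hz) hx' ?_
  calc cfMap (1 :: 1 :: List.replicate (2 * k) 1) (cfMap [2] y)
      = 1 + 1 / cfMap (1 :: List.replicate (2 * k) 1) (cfMap [2] y) := by simp
    _ < 2 := by
      have := (div_lt_one (by linarith)).2 hlt
      linarith
    _ ≤ cfMap [2] x := two_le_cfMap_two hx

lemma two_lt_cfStreamVal_form41 (s : ℕ → ℕ) : 2 < cfStreamVal (form41 s) := by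
  have := (cfStreamVal_mem_Icc (form41_mem_Icc fun i => s (i + 1))).1
  rw [cfStreamVal_form41, cfMap_form41Block]
  exact_mod_cast lt_cfMap_cons 2 _ (cfMap_pos [2] (by linarith))

lemma cfMap_form41Blocks_cons (b : ℕ) (l : List ℕ) :
    cfMap (form41Blocks (b :: l)) 0 =
      cfMap [2] (cfMap (List.replicate (2 * b) 1 ++ [2]) (cfMap (form41Blocks l) 0)) := by
  simp [form41Blocks_cons, form41Block, cfMap_append]

lemma cfMap_form41Blocks_succ_cons (b : ℕ) (l : List ℕ) :
    cfMap (form41Blocks ((b + 1) :: l)) 0 =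
      cfMap [2, 1, 1] (cfMap (List.replicate (2 * b) 1 ++ [2]) (cfMap (form41Blocks l) 0)) := by
  simp [form41Blocks_cons, form41Block, cfMap_append, Nat.mul_succ, List.replicate_succ]

lemma cfMap_replicate_append_two_pos (b : ℕ) (l : List ℕ) :
    0 < cfMap (List.replicate (2 * b) 1 ++ [2]) (cfMap (form41Blocks l) 0) := by
  rw [cfMap_append]
  exact cfMap_pos _ (by linarith [two_le_cfMap_two (cfMap_nonneg (form41Blocks l) le_rfl)])

lemma two_le_cfMap_form41Blocks_cons (b : ℕ) (t : List ℕ) :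
    2 ≤ cfMap (form41Blocks (b :: t)) 0 := by
  rw [form41Blocks_cons, cfMap_append, cfMap_form41Block]
  have := two_le_cfMap_two (cfMap_nonneg (form41Blocks t) le_rfl)
  exact_mod_cast le_cfMap_cons 2 _ (by linarith)

lemma form41Blocks_compare_of_ne (s : ℕ → ℕ) {b : ℕ} (t : List ℕ) (hb : b ≠ s 0) :
    (b :: t < (List.range (t.length + 1)).map s →
        cfMap (form41Blocks (b :: t)) 0 < cfStreamVal (form41 s)) ∧
      (¬ b :: t < (List.range (t.length + 1)).map s →
        cfStreamVal (form41 s) < cfMap (form41Blocks (b :: t)) 0) := by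
  rw [map_range_succ_eq_cons, List.cons_lt_cons_iff, form41Blocks_cons, cfMap_append,
    cfStreamVal_form41]
  have hF := (cfStreamVal_mem_Icc (form41_mem_Icc fun i => s (i + 1))).1
  have hB := cfMap_nonneg (form41Blocks t) le_rfl
  rcases hb.lt_or_gt with h | h
  · exact ⟨fun _ => cfMap_form41Block_lt_of_lt h hB (by linarith), fun h' => absurd (Or.inl h) h'⟩
  · refine ⟨fun h' => ?_, fun _ => cfMap_form41Block_lt_of_lt h (by linarith) hB⟩
    rcases h' with h' | ⟨h', -⟩ <;> omega

/-- Blocks have even length, so equal blocks preserve the inequality and the comparison is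
decided at the first entry where `b :: t` and `s` differ. -/
theorem form41Blocks_compare (s : ℕ → ℕ) (b : ℕ) (t : List ℕ) :
    (b :: t < (List.range (t.length + 1)).map s →
        cfMap (form41Blocks (b :: t)) 0 < cfStreamVal (form41 s)) ∧
      (¬ b :: t < (List.range (t.length + 1)).map s →
        cfStreamVal (form41 s) < cfMap (form41Blocks (b :: t)) 0) := by
  induction t generalizing b s with
  | nil =>
    rcases ne_or_eq b (s 0) with hb | rfl
    · exact form41Blocks_compare_of_ne s [] hb
    rw [map_range_succ_eq_cons, List.cons_lt_cons_iff, form41Blocks_cons, cfMap_append,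
      cfStreamVal_form41]
    have hF := (cfStreamVal_mem_Icc (form41_mem_Icc fun i => s (i + 1))).1
    refine ⟨fun h => ?_, fun _ => cfMap_form41Block_lt_cfMap_form41Block_zero _ (by linarith)⟩
    rcases h with h | ⟨-, h⟩
    · exact absurd h (lt_irrefl _)
    · exact absurd h (List.not_lt_nil _)
  | cons c t ih =>
    rcases ne_or_eq b (s 0) with hb | rfl
    · exact form41Blocks_compare_of_ne s _ hb
    rw [map_range_succ_eq_cons, List.cons_lt_cons_iff, form41Blocks_cons, cfMap_append,
      cfStreamVal_form41]
    have hF := (cfStreamVal_mem_Icc (form41_mem_Icc fun i => s (i + 1))).1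
    have hB := two_le_cfMap_form41Blocks_cons c t
    have hmono := cfMap_form41Block_strictMonoOn (s 0)
    simp only [lt_irrefl, false_or, true_and]
    exact ⟨fun h => hmono (by simp; linarith) (by simp; linarith) ((ih _ _).1 h),
      fun h => hmono (by simp; linarith) (by simp; linarith) ((ih _ _).2 h)⟩

lemma reverse_map_range (r : ℕ → ℕ) (n : ℕ) :
    ((List.range n).map r).reverse = (List.range n).map fun j => r (n - 1 - j) := by
  rw [← List.map_reverse, List.range_eq_range', List.reverse_range', List.map_map,
    ← List.range_eq_range']
  simp [Function.comp_def]

lemma not_map_range_lt_map_range {f g : ℕ → ℕ} {n : ℕ}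
    (h : ∀ j < n, (∀ k < j, f k = g k) → f j ≠ g j → g j < f j) :
    ¬ (List.range n).map f < (List.range n).map g := by
  rw [List.lt_iff_exists]
  rintro (⟨-, hlt⟩ | ⟨j, hu, hv, heq, hlt⟩)
  · simp at hlt
  · simp only [List.length_map, List.length_range, List.getElem_map, List.getElem_range]
      at hu heq hlt
    exact lt_asymm hlt (h j hu heq hlt.ne)

lemma CondA.le_add_one {r : ℕ → ℕ} (hA : CondA r) (i : ℕ) :
    r (i + 1) ≤ r i + 1 ∧ r i ≤ r (i + 1) + 1 := by
  have := abs_le.1 (hA i)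
  omega

lemma CondB.not_lt_of_succ_add_one_eq {r : ℕ → ℕ} (hB : CondB r) {i : ℕ}
    (h : r (i + 1) + 1 = r i) :
    ¬ (List.range i).map (fun j => r (i + 2 + j)) < ((List.range i).map r).reverse := by
  rw [reverse_map_range]
  refine not_map_range_lt_map_range fun j hj heq hne => ?_
  have key := (hB i).1 h (j + 1) (by omega) (by omega)
    (fun k hk₁ hk₂ => by convert heq (k - 1) (by omega) using 2 <;> omega)
    (by convert hne using 2 <;> omega)
  convert key using 2 <;> omega

lemma CondB.not_lt_of_eq_add_one {r : ℕ → ℕ} (hB : CondB r) {i : ℕ} (h : r (i + 1) = r i + 1) :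
    ¬ ((List.range i).map r).reverse < (List.range i).map (fun j => r (i + 2 + j)) := by
  rw [reverse_map_range]
  refine not_map_range_lt_map_range fun j hj heq hne => ?_
  have key := (hB i).2 h (j + 1) (by omega) (by omega)
    (fun k hk₁ hk₂ => by convert (heq (k - 1) (by omega)).symm using 2 <;> omega)
    (by convert hne.symm using 2 <;> omega)
  convert key using 2 <;> omega

lemma map_range_succ_add_one (r : ℕ → ℕ) (i : ℕ) :
    (List.range (i + 1)).map (fun j => r (i + 1 + j)) =
      r (i + 1) :: (List.range i).map fun j => r (i + 2 + j) := by
  rw [map_range_succ_eq_cons]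
  congr 1
  exact List.map_congr_left fun j _ => congrArg r (by omega)

lemma CondB.not_succ_cons_lt {r : ℕ → ℕ} (hA : CondA r) (hB : CondB r) (i : ℕ) :
    ¬ (r i + 1) :: ((List.range i).map r).reverse <
      (List.range (i + 1)).map fun j => r (i + 1 + j) := by
  rw [map_range_succ_add_one, List.cons_lt_cons_iff]
  rintro (h | ⟨h, h'⟩)
  · linarith [(hA.le_add_one i).1]
  · exact hB.not_lt_of_eq_add_one h.symm h'

lemma CondB.cons_lt_of_eq_add_one {r : ℕ → ℕ} (hA : CondA r) (hB : CondB r) (hC : CondC01 r)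
    {i c : ℕ} (hc : r i = c + 1) :
    c :: ((List.range i).map r).reverse < (List.range (i + 1)).map fun j => r (i + 1 + j) := by
  rw [map_range_succ_add_one, List.cons_lt_cons_iff]
  rcases lt_or_ge c (r (i + 1)) with h | h
  · exact Or.inl h
  have hdec : r (i + 1) + 1 = r i := by have := (hA.le_add_one i).2; omega
  refine Or.inr ⟨by omega, lt_of_le_of_ne (not_lt.1 (hB.not_lt_of_succ_add_one_eq hdec))
    fun heq => ?_⟩
  obtain ⟨j, hj₁, hji, hlt⟩ := hC.2 i hdec
  rw [reverse_map_range] at heq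
  have := List.map_inj_left.1 heq (j - 1) (List.mem_range.2 (by omega))
  rw [show i - 1 - (j - 1) = i - j by omega, show i + 2 + (j - 1) = i + j + 1 by omega] at this
  omega

lemma mu_lt_three_of_eq_one {A : ℕ → ℕ} (hA : ∀ k, A k ∈ Icc 1 2) {n : ℕ} (hn : 1 ≤ n)
    (h : A n = 1) : mu A n < 3 := by
  obtain ⟨n, rfl⟩ := Nat.exists_eq_add_of_le' hn
  have hP : 1 ≤ cfMap ((List.range (n + 1)).map A).reverse 0 := by
    rw [List.range_succ, List.map_append, List.reverse_append, List.map_singleton,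
      List.reverse_singleton, List.singleton_append]
    exact le_trans (by exact_mod_cast (hA n).1) (le_cfMap_cons _ _ le_rfl)
  have hV := cfStreamVal_mem_Icc fun k => hA (n + 1 + (1 + k))
  have hV' : 1 / cfStreamVal (fun k => A (n + 1 + (1 + k))) ≤ 3 / 4 := by
    rw [div_le_iff₀ (by linarith [hV.1])]; linarith [hV.1]
  rw [mu_eq, cfStreamVal_eq_cfMap (fun k => hA _) 1]
  simp only [List.range_one, List.map_singleton, add_zero, h, cfMap_cons, cfMap_nil,
    Nat.cast_one]
  have : 1 / cfMap ((List.range (n + 1)).map A).reverse 0 ≤ 1 := by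
    rw [div_le_one (by linarith)]; exact hP
  linarith

lemma mu_form41_lt_three_of_block_start {r : ℕ → ℕ} (hA : CondA r) (hB : CondB r) (i : ℕ) :
    mu (form41 r) (form41Blocks ((List.range (i + 1)).map r)).length < 3 := by
  set L := ((List.range i).map r).reverse with hL
  have hlen : L.length = i := by simp [L]
  have hcmp := (form41Blocks_compare _ _ _).2 (by rw [hlen]; exact hB.not_succ_cons_lt hA i)
  rw [cfMap_form41Blocks_succ_cons] at hcmp
  have hT := cfMap_replicate_append_two_pos (r i) L
  simp only [mu_eq, map_range_form41_length_form41Blocks, form41_length_form41Blocks_add]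
  rw [form41Blocks_reverse, List.range_succ, List.map_append, List.reverse_append,
    List.map_singleton, List.reverse_singleton, List.singleton_append, ← hL,
    cfMap_form41Blocks_cons]
  calc _ < 1 / cfMap [2] _ + cfMap [2, 1, 1] _ := by gcongr
    _ = 3 := by
      rw [cfMap_cons _ [1, 1], ← add_assoc, add_comm _ ((2 : ℕ) : ℝ), add_assoc,
        inv_cfMap_two_add_inv_cfMap_one_one hT]
      norm_num

lemma cfStreamVal_form41_block_end (r : ℕ → ℕ) (i : ℕ) :
    cfStreamVal (fun k =>
      form41 r ((form41Blocks ((List.range i).map r)).length + (2 * r i + 1) + k)) =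
      cfMap [2] (cfStreamVal (form41 fun j => r (i + 1 + j))) := by
  rw [cfStreamVal_eq_cfMap (fun k => form41_mem_Icc _ _) 1]
  simp only [add_assoc, form41_length_form41Blocks_add]
  have h2 : form41 (fun j => r (i + j)) (2 * r i + (1 + 0)) = 2 := by
    rw [form41, dif_pos (by simp)]; simp
  have hshift : (fun k => form41 (fun j => r (i + j)) (2 * r i + (1 + (1 + k)))) =
      form41 fun j => r (i + 1 + j) := by
    ext k
    have := form41_add (fun j => r (i + j)) k
    simp only [add_zero] at this
    rw [show 2 * r i + (1 + (1 + k)) = 2 * r i + 2 + k by ring, this]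
    simp only [add_assoc, add_comm 1]
  rw [hshift, List.range_one, List.map_singleton, h2]
  simp only [add_assoc]

lemma reverse_map_range_form41_block_end (r : ℕ → ℕ) (i : ℕ) :
    ((List.range ((form41Blocks ((List.range i).map r)).length + (2 * r i + 1))).map
      (form41 r)).reverse =
      List.replicate (2 * r i) 1 ++ 2 :: form41Blocks ((List.range i).map r).reverse := by
  rw [map_range_form41_length_form41Blocks_add _ _ (by omega), List.reverse_append,
    form41Blocks_reverse]
  simp [form41Block]

lemma mu_form41_lt_three_of_block_end {r : ℕ → ℕ} (hA : CondA r) (hB : CondB r)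
    (hC : CondC01 r) (i : ℕ) :
    mu (form41 r) ((form41Blocks ((List.range i).map r)).length + (2 * r i + 1)) < 3 := by
  rw [mu_eq, reverse_map_range_form41_block_end, cfStreamVal_form41_block_end]
  set L := ((List.range i).map r).reverse
  set F := cfStreamVal (form41 fun j => r (i + 1 + j))
  have hF := two_lt_cfStreamVal_form41 fun j => r (i + 1 + j)
  rw [cfMap_cons _ [], cfMap_nil]
  push_cast
  obtain hz | ⟨c, hc⟩ : r i = 0 ∨ ∃ c, r i = c + 1 := by cases r i <;> simp
  · have hP : 2 ≤ cfMap (List.replicate (2 * r i) 1 ++ 2 :: form41Blocks L) 0 := by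
      rw [hz]; exact_mod_cast le_cfMap_cons 2 _ le_rfl
    have h₁ := one_div_le_one_div_of_le (by norm_num) hP
    have h₂ : 1 / F < 1 / 2 := one_div_lt_one_div_of_lt (by norm_num) hF
    linarith
  have hlen : L.length = i := by simp [L]
  have hcmp := (form41Blocks_compare _ _ _).1
    (by rw [hlen]; exact hB.cons_lt_of_eq_add_one hA hC hc)
  set T := cfMap (List.replicate (2 * c) 1 ++ [2]) (cfMap (form41Blocks L) 0)
  have hT : 0 < T := cfMap_replicate_append_two_pos c L
  rw [cfMap_form41Blocks_cons] at hcmp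
  have hP : cfMap (List.replicate (2 * r i) 1 ++ 2 :: form41Blocks L) 0 = cfMap [1, 1] T := by
    simp [T, hc, Nat.mul_succ, List.replicate_succ, cfMap_append]
  have hF' : 1 / F < 1 / cfMap [2] T := one_div_lt_one_div_of_lt (cfMap_pos _ hT) hcmp
  rw [hP]
  linarith [inv_cfMap_two_add_inv_cfMap_one_one hT]

/-- Theorem 4.1, sufficiency: if `r ∈ M₀₁` and `A` is of form (4.1) built from `r`,
then `μ_n(A) < 3` for all `n ≥ 1`. -/
theorem form41_mu_lt_three (r : ℕ → ℕ) (hr : MemM01 r) :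
    ∀ n, 1 ≤ n → mu (form41 r) n < 3 := by
  obtain ⟨hA, hB, hC⟩ := hr
  intro n hn
  obtain ⟨i, m, rfl, hm⟩ := exists_eq_length_form41Blocks_add r n
  obtain rfl | hm₀ := Nat.eq_zero_or_pos m
  · obtain ⟨i, rfl⟩ : ∃ j, i = j + 1 :=
      Nat.exists_eq_succ_of_ne_zero (by rintro rfl; simp [form41Blocks] at hn)
    exact mu_form41_lt_three_of_block_start hA hB i
  obtain hmid | rfl : m ≤ 2 * r i ∨ m = 2 * r i + 1 := by omega
  · refine mu_lt_three_of_eq_one (form41_mem_Icc r) hn ?_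
    rw [form41_length_form41Blocks_add]
    exact form41_eq_one _ hm₀ hmid
  · exact mu_form41_lt_three_of_block_end hA hB hC i
end

section
/- Let r(1), r(2), … be a sequence in M₀₁ which is not the constant zero sequence. Then there is a positive integer r such that the sequence is of one of the following types: (R₀) the constant sequence r, r, r, …; (R₀₁) the sequence r−1, r, r, r, …; or (R) the concatenation (r−1)_{s(1)}, r, (r−1)_{s(2)}, r, (r−1)_{s(3)}, r, … (where (r−1)_k denotes the value r−1 repeated k times) for some sequence s(1), s(2), … in M₁₀ with s(i) ≠ 0 for infinitely many i. -/
/-! Let `m` be the least value of `r`. Comparing, as (B) and (C₀₁) require, the words read to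
the left and to the right of the first place where `r` reaches `m + 2` shows that `r` only takes
the values `m` and `m + 1`. If `m` occurs only finitely often, (B) at its last occurrence forces
that occurrence to be `r 0`. Otherwise `r` consists of runs of `m`'s of lengths `s 0, s 1, …`,
each followed by a single `m + 1`. Reading the words around an `m + 1` run by run turns the
lexicographic comparisons of (B) for `r` into those of (B) for `s` with the order reversed, and
the comparisons that run past the start of `r`, governed by (C₀₁), yield (C₁₀) for `s`. -/

lemma exists_last_before {P : ℕ → Prop} [DecidablePred P] {a b : ℕ} (ha : P a) (hab : a < b) :
    ∃ n, P n ∧ n < b ∧ ∀ k, n < k → k < b → ¬ P k :=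
  ⟨Nat.findGreatest P (b - 1), Nat.findGreatest_spec (by omega) ha,
    (Nat.findGreatest_le _).trans_lt (by omega),
    fun _ h1 h2 => Nat.findGreatest_is_greatest h1 (by omega)⟩

lemma exists_last_of_finite {P : ℕ → Prop} (hfin : {t | P t}.Finite) (h : ∃ t, P t) :
    ∃ n, P n ∧ ∀ k, n < k → ¬ P k := by
  obtain ⟨n, hn, hmax⟩ := Set.exists_max_image _ id hfin h
  exact ⟨n, hn, fun k hk hPk => absurd (hmax k hPk) (by simpa using hk)⟩

section MarkoffBalanced

variable {r : ℕ → ℕ}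

lemma CondA.succ_le (hA : CondA r) (i : ℕ) : r (i + 1) ≤ r i + 1 := by
  have := abs_le.mp (hA i); omega

lemma CondA.le_succ (hA : CondA r) (i : ℕ) : r i ≤ r (i + 1) + 1 := by
  have := abs_le.mp (hA i); omega

lemma CondB.le_of_fall (hB : CondB r) {i j : ℕ} (hfall : r (i + 1) + 1 = r i) (hj : 1 ≤ j)
    (hji : j ≤ i) (hpal : ∀ k, 1 ≤ k → k < j → r (i + k + 1) = r (i - k)) :
    r (i - j) ≤ r (i + j + 1) := by
  rcases eq_or_ne (r (i + j + 1)) (r (i - j)) with h | h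
  · exact h.ge
  · exact ((hB i).1 hfall j hj hji hpal h).le

lemma CondB.le_of_rise (hB : CondB r) {i j : ℕ} (hrise : r (i + 1) = r i + 1) (hj : 1 ≤ j)
    (hji : j ≤ i) (hpal : ∀ k, 1 ≤ k → k < j → r (i + k + 1) = r (i - k)) :
    r (i + j + 1) ≤ r (i - j) := by
  rcases eq_or_ne (r (i + j + 1)) (r (i - j)) with h | h
  · exact h.le
  · exact ((hB i).2 hrise j hj hji hpal h).le

lemma CondB.eq_of_fall_of_le (hB : CondB r) {i j : ℕ} (hfall : r (i + 1) + 1 = r i) (hji : j ≤ i)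
    (hle : ∀ k, 1 ≤ k → k ≤ j → r (i + k + 1) ≤ r (i - k)) :
    ∀ k, 1 ≤ k → k ≤ j → r (i + k + 1) = r (i - k) := by
  intro k
  induction k using Nat.strong_induction_on with
  | _ k ih =>
    intro hk hkj
    have := hB.le_of_fall hfall hk (hkj.trans hji) fun l hl hlk => ih l hlk hl (by omega)
    have := hle k hk hkj
    omega

lemma CondB.eq_of_rise_of_ge (hB : CondB r) {i j : ℕ} (hrise : r (i + 1) = r i + 1) (hji : j ≤ i)
    (hge : ∀ k, 1 ≤ k → k ≤ j → r (i - k) ≤ r (i + k + 1)) :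
    ∀ k, 1 ≤ k → k ≤ j → r (i + k + 1) = r (i - k) := by
  intro k
  induction k using Nat.strong_induction_on with
  | _ k ih =>
    intro hk hkj
    have := hB.le_of_rise hrise hk (hkj.trans hji) fun l hl hlk => ih l hlk hl (by omega)
    have := hge k hk hkj
    omega

/- At a fall, (B) and (C₀₁) together say that the word read to the right of the fall is
lexicographically strictly larger than the word read to the left; `O` is the first place where
the right word is assumed to be smaller. -/
lemma false_of_fall_of_reflect_le (hB : CondB r) (hC : CondC01 r) {x O : ℕ}
    (hfall : r (x + 1) + 1 = r x) (hO : 1 ≤ O)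
    (hle : ∀ o, 1 ≤ o → o < O → o ≤ x → r (x + o + 1) ≤ r (x - o))
    (hlt : O ≤ x → r (x + O + 1) < r (x - O)) : False := by
  by_cases hOx : O ≤ x
  · have hpal := hB.eq_of_fall_of_le hfall (j := O - 1) (by omega)
      fun k h1 h2 => hle k h1 (by omega) (by omega)
    have := hB.le_of_fall hfall hO hOx fun k h1 h2 => hpal k h1 (by omega)
    have := hlt hOx
    omega
  · obtain ⟨j, hj1, hjx, hj⟩ := hC.2 x hfall
    have := hB.eq_of_fall_of_le hfall le_rfl (fun k h1 h2 => hle k h1 (by omega) h2) j hj1 hjx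
    omega

lemma false_of_rise_of_reflect_ge (hB : CondB r) {x O : ℕ} (hrise : r (x + 1) = r x + 1)
    (hO : 1 ≤ O) (hOx : O ≤ x) (hge : ∀ o, 1 ≤ o → o < O → r (x - o) ≤ r (x + o + 1))
    (hlt : r (x - O) < r (x + O + 1)) : False := by
  have hpal := hB.eq_of_rise_of_ge hrise (j := O - 1) (by omega)
    fun k h1 h2 => hge k h1 (by omega)
  have := hB.le_of_rise hrise hO hOx fun k h1 h2 => hpal k h1 (by omega)
  omega

lemma false_of_rise_of_plateau (hB : CondB r) (hC : CondC01 r) {d : ℕ} (hd : 1 ≤ d)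
    (hrise : r (d + 1) = r d + 1) (hleft : ∀ t, t ≤ d → r t ≤ r (d + 1))
    (hplat : ∀ t, d < t → t ≤ 2 * d + 1 → r t = r (d + 1)) : False := by
  have hback := hB.eq_of_rise_of_ge hrise le_rfl fun k _ hk =>
    (hleft _ (by omega)).trans (hplat (d + k + 1) (by omega) (by omega)).ge
  have hfall : r (d - 1 + 1) + 1 = r (d - 1) := by
    rw [show d - 1 + 1 = d by omega, ← hback 1 le_rfl hd, hplat (d + 1 + 1) (by omega) (by omega),
      hrise]
  obtain ⟨j, hj1, hjd, hj⟩ := hC.2 (d - 1) hfall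
  rw [show d - 1 - j = d - (j + 1) by omega, ← hback (j + 1) (by omega) (by omega),
    hplat (d + (j + 1) + 1) (by omega) (by omega),
    hplat (d - 1 + j + 1) (by omega) (by omega)] at hj
  exact lt_irrefl _ hj

lemma false_of_rise_before_higher (hB : CondB r) (hC : CondC01 r) {d c : ℕ} (hd : 1 ≤ d)
    (hrise : r (d + 1) = r d + 1) (hleft : ∀ t, t < c → r t ≤ r (d + 1))
    (hplat : ∀ t, d < t → t < c → r t = r (d + 1)) (hdc : d < c) (hc : r (d + 1) < r c) :
    False := by
  have hdc' : d + 1 ≠ c := by rintro rfl; omega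
  by_cases hO : c - d - 1 ≤ d
  · refine false_of_rise_of_reflect_ge hB hrise (O := c - d - 1) (by omega) hO
      (fun o h1 h2 => ?_) ?_
    · exact (hleft _ (by omega)).trans (hplat (d + o + 1) (by omega) (by omega)).ge
    · rw [show d + (c - d - 1) + 1 = c by omega]
      exact (hleft _ (by omega)).trans_lt hc
  · exact false_of_rise_of_plateau hB hC hd hrise (fun t ht => hleft t (by omega))
      fun t h1 h2 => hplat t h1 (by omega)

lemma false_of_fall_before_lower (hB : CondB r) (hC : CondC01 r) {x e : ℕ}
    (hfall : r (x + 1) + 1 = r x) (hleft : ∀ t, t < e → r (x + 1) ≤ r t)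
    (hplat : ∀ t, x < t → t < e → r t = r (x + 1)) (hxe : x < e) (he : r e < r (x + 1)) :
    False := by
  have hxe' : x + 1 ≠ e := by rintro rfl; omega
  refine false_of_fall_of_reflect_le hB hC hfall (O := e - x - 1) (by omega)
    (fun o h1 h2 _ => ?_) fun _ => ?_
  · exact (hplat (x + o + 1) (by omega) (by omega)).le.trans (hleft _ (by omega))
  · rw [show x + (e - x - 1) + 1 = e by omega]
    exact he.trans_le (hleft _ (by omega))

lemma false_of_initial_plateau (hA : CondA r) (hB : CondB r) {m c : ℕ} (hmin : ∀ t, m ≤ r t)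
    (hc : 2 ≤ c) (h0 : r 0 = m) (hplat : ∀ t, 1 ≤ t → t < c → r t = m + 1) (hrc : r c = m + 2) :
    False := by
  have hrise : r (c - 1 + 1) = r (c - 1) + 1 := by
    rw [show c - 1 + 1 = c by omega, hplat (c - 1) (by omega) (by omega), hrc]
  have hleft : ∀ k, k ≤ c - 1 → r (c - 1 - k) ≤ m + 1 := fun k hk => by
    rcases Nat.eq_zero_or_pos (c - 1 - k) with h | h
    · rw [h, h0]; omega
    · rw [hplat _ h (by omega)]
  classical
  have hex : ∃ g, 1 ≤ g ∧ g ≤ c - 1 ∧ r (c + g) ≠ m + 1 := by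
    by_contra! h
    have := hB.le_of_rise hrise (j := c - 1) (by omega) le_rfl fun k h1 h2 => by
      rw [show c - 1 + k + 1 = c + k by omega, h k h1 (by omega), hplat _ (by omega) (by omega)]
    rw [show c - 1 + (c - 1) + 1 = c + (c - 1) by omega, h _ (by omega) le_rfl,
      Nat.sub_self, h0] at this
    omega
  obtain ⟨g, ⟨hg1, hgc, hg⟩, hfirst⟩ := Nat.findX hex
  have hpal : ∀ k, 1 ≤ k → k < g → r (c + k) = m + 1 := fun k h1 h2 => by
    by_contra h; exact hfirst k h2 ⟨h1, by omega, h⟩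
  have hcg : r (c + g) = m := by
    have := hB.le_of_rise hrise hg1 (by omega) fun k h1 h2 => by
      rw [show c - 1 + k + 1 = c + k by omega, hpal k h1 h2, hplat _ (by omega) (by omega)]
    rw [show c - 1 + g + 1 = c + g by omega] at this
    have := hleft g (by omega); have := hmin (c + g)
    omega
  have hg2 : 2 ≤ g := by
    by_contra h
    have := hA.le_succ c
    rw [show g = 1 by omega] at hcg
    omega
  have hfall : r (c + 1) + 1 = r c := by rw [hpal 1 le_rfl (by omega), hrc]
  have := hB.le_of_fall hfall (j := g - 1) (by omega) (by omega) fun k h1 h2 => by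
    rw [show c + k + 1 = c + (k + 1) by omega, hpal _ (by omega) (by omega),
      hplat _ (by omega) (by omega)]
  rw [show c + (g - 1) + 1 = c + g by omega, hcg, hplat _ (by omega) (by omega)] at this
  omega

lemma false_of_min_before_big (hA : CondA r) (hB : CondB r) (hC : CondC01 r) {m c t₀ : ℕ}
    (hmin : ∀ t, m ≤ r t) (hbefore : ∀ t < c, r t ≤ m + 1) (hc : m + 2 ≤ r c) (ht₀c : t₀ < c)
    (ht₀ : r t₀ = m) : False := by
  classical
  obtain ⟨d, hd, hdc, hlast⟩ := exists_last_before (P := fun t => r t = m) ht₀ ht₀c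
  have hplat : ∀ t, d < t → t < c → r t = m + 1 := fun t h1 h2 => by
    have := hlast t h1 h2; have := hbefore t h2; have := hmin t; omega
  have hdc2 : d + 2 ≤ c := by
    by_contra h
    have := hA.succ_le d
    rw [show d + 1 = c by omega] at this
    omega
  have hrc : r c = m + 2 := by
    have := hA.succ_le (c - 1)
    rw [show c - 1 + 1 = c by omega, hplat (c - 1) (by omega) (by omega)] at this
    omega
  rcases Nat.eq_zero_or_pos d with rfl | hd1
  · exact false_of_initial_plateau hA hB hmin (by omega) hd (fun t h1 => hplat t h1) hrc
  · have hd1' := hplat (d + 1) (by omega) (by omega)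
    exact false_of_rise_before_higher hB hC hd1 (by omega) (fun t ht => hd1' ▸ hbefore t ht)
      (fun t h1 h2 => hd1' ▸ hplat t h1 h2) (by omega) (by omega)

lemma false_of_big_before_min (hA : CondA r) (hB : CondB r) (hC : CondC01 r) {m c e : ℕ}
    (hleft : ∀ t < e, m + 1 ≤ r t) (he : r e = m) (hc : m + 2 ≤ r c) (hce : c < e) : False := by
  classical
  obtain ⟨x, hx, hxe, hlast⟩ := exists_last_before (P := fun t => m + 2 ≤ r t) hc hce
  have hplat : ∀ t, x < t → t < e → r t = m + 1 := fun t h1 h2 => by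
    have := hlast t h1 h2; have := hleft t h2; omega
  have hxe2 : x + 2 ≤ e := by
    by_contra h
    have := hA.le_succ x
    rw [show x + 1 = e by omega] at this
    omega
  have hx1 := hplat (x + 1) (by omega) (by omega)
  have hfall : r (x + 1) + 1 = r x := by have := hA.le_succ x; omega
  exact false_of_fall_before_lower hB hC hfall (fun t ht => hx1 ▸ hleft t ht)
    (fun t h1 h2 => hx1 ▸ hplat t h1 h2) hxe (by omega)

theorem le_add_one_of_forall_le (hA : CondA r) (hB : CondB r) (hC : CondC01 r) {m : ℕ}
    (hmin : ∀ t, m ≤ r t) (hm : ∃ t, r t = m) : ∀ t, r t ≤ m + 1 := by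
  classical
  by_contra! hbig
  obtain ⟨c, hc, hbefore⟩ := Nat.findX (p := fun t => m + 2 ≤ r t)
    (by obtain ⟨t, ht⟩ := hbig; exact ⟨t, ht⟩)
  replace hbefore : ∀ t < c, r t ≤ m + 1 := fun t ht => by have := hbefore t ht; omega
  by_cases hmc : ∃ t < c, r t = m
  · obtain ⟨t₀, ht₀c, ht₀⟩ := hmc
    exact false_of_min_before_big hA hB hC hmin hbefore hc ht₀c ht₀
  · obtain ⟨e, he, hefirst⟩ := Nat.findX hm
    have hce : c < e := by
      by_contra h
      rcases Nat.lt_or_ge e c with h' | h'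
      · exact hmc ⟨e, h', he⟩
      · rw [show e = c by omega] at he; omega
    refine false_of_big_before_min hA hB hC (fun t ht => ?_) he hc hce
    have := hefirst t ht; have := hmin t; omega

theorem infinite_setOf_eq_add_one (hC : CondC01 r) {m : ℕ} (hmin : ∀ t, m ≤ r t)
    (hmax : ∀ t, r t ≤ m + 1) (h : ∃ t, r t = m + 1) : {t | r t = m + 1}.Infinite := by
  intro hfin
  obtain ⟨i, hi, hlast⟩ := exists_last_of_finite hfin h
  have hafter : ∀ t, i < t → r t = m := fun t ht => by
    have := hlast t ht; have := hmin t; have := hmax t; omega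
  obtain ⟨j, -, -, hj⟩ := hC.2 i (by rw [hafter (i + 1) (by omega)]; exact hi.symm)
  have := hmin (i - j)
  rw [hafter (i + j + 1) (by omega)] at hj
  omega

theorem eq_of_finite_setOf_eq (hB : CondB r) (hC : CondC01 r) {m : ℕ} (hmin : ∀ t, m ≤ r t)
    (hmax : ∀ t, r t ≤ m + 1) (hm : ∃ t, r t = m) (hfin : {t | r t = m}.Finite) :
    r 0 = m ∧ ∀ i, r (i + 1) = m + 1 := by
  obtain ⟨i, hi, hlast⟩ := exists_last_of_finite hfin hm
  have hafter : ∀ t, i < t → r t = m + 1 := fun t ht => by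
    have := hlast t ht; have := hmin t; have := hmax t; omega
  obtain rfl : i = 0 := by
    by_contra h
    have hi1 := hafter (i + 1) (by omega)
    exact false_of_rise_of_plateau hB hC (d := i) (by omega) (by omega)
      (fun t _ => hi1 ▸ hmax t) fun t h1 _ => (hafter t h1).trans hi1.symm
  exact ⟨hi, fun t => hafter (t + 1) (by omega)⟩

end MarkoffBalanced

def blockPos (s : ℕ → ℕ) : ℕ → ℕ
  | 0 => s 0
  | k + 1 => blockPos s k + s (k + 1) + 1

section BlockSeq

variable {a b : ℕ} {s : ℕ → ℕ}

lemma blockPos_succ (s : ℕ → ℕ) (k : ℕ) : blockPos s (k + 1) = blockPos s k + s (k + 1) + 1 :=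
  rfl

lemma le_blockPos (s : ℕ → ℕ) (k : ℕ) : s k ≤ blockPos s k := by
  cases k <;> simp only [blockPos] <;> omega

lemma blockPos_strictMono (s : ℕ → ℕ) : StrictMono (blockPos s) :=
  strictMono_nat_of_lt_succ fun k => by rw [blockPos_succ]; omega

lemma blockPos_succ_eq_shift (s : ℕ → ℕ) (k : ℕ) :
    blockPos s (k + 1) = blockPos (fun i => s (i + 1)) k + (s 0 + 1) := by
  induction k with
  | zero => simp only [blockPos]; omega
  | succ k ih => rw [blockPos_succ, ih, blockPos_succ]; omega

open Classical in
theorem blockSeq_eq_ite (a b : ℕ) (s : ℕ → ℕ) (n : ℕ) :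
    blockSeq a b s n = if ∃ k, blockPos s k = n then b else a := by
  induction n using Nat.strong_induction_on generalizing s with
  | _ n ih =>
    have hpos0 : blockPos s 0 = s 0 := rfl
    rw [blockSeq]
    by_cases hn : n < s 0 + 1
    · rw [dif_pos hn]
      by_cases hlt : n < s 0
      · rw [if_pos hlt, if_neg]
        rintro ⟨k, rfl⟩
        have := (blockPos_strictMono s).monotone (Nat.zero_le k)
        omega
      · rw [if_neg hlt, if_pos ⟨0, by omega⟩]
    · rw [dif_neg hn, ih _ (by omega)]
      congr 1
      apply propext
      constructor
      · rintro ⟨k, hk⟩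
        exact ⟨k + 1, by rw [blockPos_succ_eq_shift]; omega⟩
      · rintro ⟨_ | k, hk⟩
        · omega
        · exact ⟨k, by rw [blockPos_succ_eq_shift] at hk; omega⟩

lemma blockSeq_blockPos (k : ℕ) : blockSeq a b s (blockPos s k) = b := by
  rw [blockSeq_eq_ite, if_pos ⟨k, rfl⟩]

lemma blockSeq_of_forall_ne {n : ℕ} (h : ∀ k, blockPos s k ≠ n) : blockSeq a b s n = a := by
  rw [blockSeq_eq_ite, if_neg (not_exists.mpr h)]

lemma blockSeq_of_mem_gap {k t : ℕ} (h1 : t < blockPos s k) (h2 : blockPos s k ≤ t + s k) :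
    blockSeq a b s t = a := by
  refine blockSeq_of_forall_ne fun k' hk' => ?_
  have hk'k := (blockPos_strictMono s).lt_iff_lt.mp (hk' ▸ h1)
  obtain ⟨k, rfl⟩ : ∃ l, k = l + 1 := ⟨k - 1, by omega⟩
  have := (blockPos_strictMono s).monotone (show k' ≤ k by omega)
  rw [blockPos_succ] at h2
  omega

theorem exists_eq_blockSeq {r : ℕ → ℕ} (htwo : ∀ t, r t = a ∨ r t = b)
    (hinf : {t | r t = b}.Infinite) : ∃ s, r = blockSeq a b s := by
  set p := Nat.nth fun t => r t = b
  have hp := Nat.nth_strictMono hinf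
  let s : ℕ → ℕ := fun k => if k = 0 then p 0 else p k - p (k - 1) - 1
  have hpos : ∀ k, blockPos s k = p k := by
    intro k
    induction k with
    | zero => rfl
    | succ k ih =>
      have : p k < p (k + 1) := hp (Nat.lt_succ_self k)
      rw [blockPos_succ, ih]
      simp only [s, if_neg (Nat.succ_ne_zero k), Nat.add_sub_cancel]
      omega
  refine ⟨s, funext fun n => ?_⟩
  have hrange : (∃ k, p k = n) ↔ r n = b := by
    rw [← Set.mem_range, Nat.range_nth_of_infinite hinf]; rfl
  rw [blockSeq_eq_ite]
  simp only [hpos, hrange]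
  split_ifs with h
  · exact h
  · exact (htwo n).resolve_right h

lemma frequently_ne_zero_of_infinite (hab : a ≠ b) (hinf : {t | blockSeq a b s t = a}.Infinite) :
    ∀ N, ∃ i, N ≤ i ∧ s i ≠ 0 := by
  intro N
  by_contra! h
  have hshift : ∀ k, blockPos s (N + k) = blockPos s N + k := by
    intro k
    induction k with
    | zero => rfl
    | succ k ih => rw [← add_assoc, blockPos_succ, ih, h _ (by omega)]; rfl
  obtain ⟨t, ht, hNt⟩ := hinf.exists_gt (blockPos s N)
  have : blockPos s (N + (t - blockPos s N)) = t := by rw [hshift]; omega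
  rw [Set.mem_ofPred_eq, ← this, blockSeq_blockPos] at ht
  exact hab ht.symm

end BlockSeq

section GapSequence

variable {a : ℕ} {s : ℕ → ℕ}

lemma blockPos_add_blockPos_of_pal {i j : ℕ} (hji : j ≤ i)
    (hpal : ∀ k, 1 ≤ k → k < j → s (i + k + 1) = s (i - k)) :
    ∀ k < j, blockPos s (i + k + 1) + blockPos s (i - 1 - k) =
      blockPos s (i + 1) + blockPos s (i - 1) := by
  intro k
  induction k with
  | zero => intro; rfl
  | succ k ih =>
    intro hk
    have hs := hpal (k + 1) (by omega) hk
    rw [show i + (k + 1) + 1 = i + k + 1 + 1 by omega, show i - (k + 1) = i - 1 - k by omega] at hs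
    have hleft := blockPos_succ s (i - 1 - (k + 1))
    rw [show i - 1 - (k + 1) + 1 = i - 1 - k by omega] at hleft
    rw [show i + (k + 1) + 1 = i + k + 1 + 1 by omega, blockPos_succ]
    have := ih (by omega)
    omega

/- Around a palindromic stretch of gaps centred at `i`, the positions of the `a + 1`'s are
symmetric about `(blockPos s (i + 1) + blockPos s (i - 1)) / 2`, hence so is the block
sequence itself. -/
lemma blockSeq_reflect {i j t : ℕ} (hj : 1 ≤ j) (hji : j ≤ i)
    (hpal : ∀ k, 1 ≤ k → k < j → s (i + k + 1) = s (i - k))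
    (ht₁ : blockPos s (i - j) ≤ t) (ht₂ : t < blockPos s i)
    (ht₃ : blockPos s i + t < blockPos s (i + 1) + blockPos s (i - 1)) :
    blockSeq a (a + 1) s (blockPos s (i + 1) + blockPos s (i - 1) - t) =
      blockSeq a (a + 1) s t := by
  have hid := blockPos_add_blockPos_of_pal hji hpal
  have hmono := blockPos_strictMono s
  by_cases ht : ∃ k, blockPos s k = t
  · obtain ⟨k, rfl⟩ := ht
    have hk₁ := hmono.le_iff_le.mp ht₁
    have hk₂ := hmono.lt_iff_lt.mp ht₂
    have := hid (i - 1 - k) (by omega)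
    rw [show i - 1 - (i - 1 - k) = k by omega] at this
    rw [show blockPos s (i + 1) + blockPos s (i - 1) - blockPos s k =
      blockPos s (i + (i - 1 - k) + 1) by omega, blockSeq_blockPos, blockSeq_blockPos]
  · by_cases ht' : ∃ k, blockPos s k = blockPos s (i + 1) + blockPos s (i - 1) - t
    · obtain ⟨k, hk⟩ := ht'
      have hk₁ : i < k := hmono.lt_iff_lt.mp (by omega)
      have hend := hid (j - 1) (by omega)
      rw [show i + (j - 1) + 1 = i + j by omega, show i - 1 - (j - 1) = i - j by omega] at hend
      have hk₂ : k ≤ i + j := hmono.le_iff_le.mp (by omega)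
      have := hid (k - i - 1) (by omega)
      rw [show i + (k - i - 1) + 1 = k by omega] at this
      exact absurd ⟨i - 1 - (k - i - 1), by omega⟩ ht
    · rw [blockSeq_of_forall_ne (not_exists.mp ht'), blockSeq_of_forall_ne (not_exists.mp ht)]

lemma blockSeq_fall_at_blockPos {i : ℕ} (h : 1 ≤ s (i + 1)) :
    blockSeq a (a + 1) s (blockPos s i + 1) + 1 = blockSeq a (a + 1) s (blockPos s i) := by
  have := blockPos_succ s i
  rw [blockSeq_blockPos, blockSeq_of_mem_gap (k := i + 1) (by omega) (by omega)]

lemma blockSeq_rise_before_blockPos {i : ℕ} (h : 1 ≤ s i) :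
    blockSeq a (a + 1) s (blockPos s i - 1 + 1) = blockSeq a (a + 1) s (blockPos s i - 1) + 1 := by
  have := le_blockPos s i
  rw [Nat.sub_add_cancel (by omega), blockSeq_blockPos,
    blockSeq_of_mem_gap (k := i) (by omega) (by omega)]

variable (hB : CondB (blockSeq a (a + 1) s))
include hB

lemma gap_le_gap_succ_add_one (i : ℕ) : s i ≤ s (i + 1) + 1 := by
  by_contra! h
  have hsucc := blockPos_succ s i
  have hle := le_blockPos s i
  refine false_of_rise_of_reflect_ge hB (blockSeq_rise_before_blockPos (i := i) (by omega))
    (O := s (i + 1) + 1) (by omega) (by omega) (fun o h1 h2 => ?_) ?_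
  · rw [blockSeq_of_mem_gap (k := i) (by omega) (by omega),
      blockSeq_of_mem_gap (k := i + 1) (by omega) (by omega)]
  · rw [blockSeq_of_mem_gap (k := i) (by omega) (by omega),
      show blockPos s i - 1 + (s (i + 1) + 1) + 1 = blockPos s (i + 1) by omega, blockSeq_blockPos]
    omega

lemma false_of_gap_fall_of_lt {i j : ℕ} (hfall : s (i + 1) + 1 = s i) (hj : 1 ≤ j) (hji : j ≤ i)
    (hpal : ∀ k, 1 ≤ k → k < j → s (i + k + 1) = s (i - k)) (hlt : s (i + j + 1) < s (i - j)) :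
    False := by
  have hid := blockPos_add_blockPos_of_pal hji hpal (j - 1) (by omega)
  rw [show i + (j - 1) + 1 = i + j by omega, show i - 1 - (j - 1) = i - j by omega] at hid
  have hcentre : blockPos s (i + 1) + blockPos s (i - 1) + 1 = 2 * blockPos s i := by
    have := blockPos_succ s i; have := blockPos_succ s (i - 1)
    rw [show i - 1 + 1 = i by omega] at this; omega
  have hsucc := blockPos_succ s (i + j)
  have hmono := (blockPos_strictMono s) (show i - j < i by omega)
  have hle := le_blockPos s (i - j)
  -- At distance `O` the right word reaches the `a + 1` at `blockPos s (i + j + 1)`, while the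
  -- left word is still inside the longer run `s (i - j)`.
  refine false_of_rise_of_reflect_ge hB (blockSeq_rise_before_blockPos (i := i) (by omega))
    (O := blockPos s i - blockPos s (i - j) + s (i + j + 1)) (by omega) (by omega)
    (fun o h1 h2 => ?_) ?_
  · rw [show blockPos s i - 1 + o + 1 = blockPos s i + o by omega]
    by_cases hreg : blockPos s (i - j) + o + 1 ≤ blockPos s i
    · have := blockSeq_reflect (a := a) hj hji hpal (t := blockPos s i - 1 - o) (by omega)
        (by omega) (by omega)
      rw [show blockPos s (i + 1) + blockPos s (i - 1) - (blockPos s i - 1 - o) =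
        blockPos s i + o by omega] at this
      exact this.ge
    · rw [blockSeq_of_mem_gap (k := i - j) (by omega) (by omega),
        blockSeq_of_mem_gap (k := i + j + 1) (by omega) (by omega)]
  · rw [show blockPos s i - 1 + (blockPos s i - blockPos s (i - j) + s (i + j + 1)) + 1 =
      blockPos s (i + j + 1) by omega, blockSeq_blockPos,
      blockSeq_of_mem_gap (k := i - j) (by omega) (by omega)]
    omega

variable (hC : CondC01 (blockSeq a (a + 1) s))
include hC

lemma one_le_and_gap_succ_le_of_lt {i : ℕ} (h : s i < s (i + 1)) :
    1 ≤ i ∧ s (i + 1) ≤ s i + 1 := by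
  have hsucc := blockPos_succ s i
  have hle := le_blockPos s i
  by_contra hcon
  refine false_of_fall_of_reflect_le hB hC (blockSeq_fall_at_blockPos (i := i) (by omega))
    (O := s i + 1) (by omega) (fun o h1 h2 h3 => ?_) fun hO => ?_
  · rw [blockSeq_of_mem_gap (k := i + 1) (by omega) (by omega),
      blockSeq_of_mem_gap (k := i) (by omega) (by omega)]
  · rcases i with _ | i
    · exact absurd hO (show ¬ s 0 + 1 ≤ s 0 by omega)
    · have hprev := blockPos_succ s i
      rw [blockSeq_of_mem_gap (k := i + 1 + 1) (by omega) (by omega),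
        show blockPos s (i + 1) - (s (i + 1) + 1) = blockPos s i by omega, blockSeq_blockPos]
      omega

/- The case `j = i`, where only `≤` is assumed, is the one in which the comparison at the fall
`blockPos s i` runs past the start of the sequence and (C₀₁) takes over from (B). -/
lemma false_of_gap_rise_of_le {i j : ℕ} (hrise : s (i + 1) = s i + 1) (hj : 1 ≤ j) (hji : j ≤ i)
    (hpal : ∀ k, 1 ≤ k → k < j → s (i + k + 1) = s (i - k)) (hle : s (i - j) ≤ s (i + j + 1))
    (hlt : j < i → s (i - j) < s (i + j + 1)) : False := by
  have hid := blockPos_add_blockPos_of_pal hji hpal (j - 1) (by omega)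
  rw [show i + (j - 1) + 1 = i + j by omega, show i - 1 - (j - 1) = i - j by omega] at hid
  have hcentre : blockPos s (i + 1) + blockPos s (i - 1) = 2 * blockPos s i + 1 := by
    have := blockPos_succ s i; have := blockPos_succ s (i - 1)
    rw [show i - 1 + 1 = i by omega] at this; omega
  have hsucc := blockPos_succ s (i + j)
  have hmono := (blockPos_strictMono s).monotone (show i - j ≤ i by omega)
  have hle' := le_blockPos s (i - j)
  -- At distance `O` the left word reaches the `a + 1` at `blockPos s (i - j - 1)`, while the
  -- right word is still inside the longer run `s (i + j + 1)`.
  refine false_of_fall_of_reflect_le hB hC (blockSeq_fall_at_blockPos (i := i) (by omega))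
    (O := blockPos s i - blockPos s (i - j) + s (i - j) + 1) (by omega)
    (fun o h1 h2 h3 => ?_) fun hO => ?_
  · by_cases hreg : blockPos s (i - j) + o ≤ blockPos s i
    · have := blockSeq_reflect (a := a) hj hji hpal (t := blockPos s i - o) (by omega)
        (by omega) (by omega)
      rw [show blockPos s (i + 1) + blockPos s (i - 1) - (blockPos s i - o) =
        blockPos s i + o + 1 by omega] at this
      exact this.le
    · rw [blockSeq_of_mem_gap (k := i + j + 1) (by omega) (by omega),
        blockSeq_of_mem_gap (k := i - j) (by omega) (by omega)]
  · have hji' : j < i := by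
      by_contra h
      have h0 : i - j = 0 := by omega
      have : blockPos s 0 = s 0 := rfl
      rw [h0] at hO
      omega
    have hprev := blockPos_succ s (i - j - 1)
    rw [show i - j - 1 + 1 = i - j by omega] at hprev
    have := hlt hji'
    rw [blockSeq_of_mem_gap (k := i + j + 1) (by omega) (by omega),
      show blockPos s i - (blockPos s i - blockPos s (i - j) + s (i - j) + 1) =
        blockPos s (i - j - 1) by omega, blockSeq_blockPos]
    omega

theorem memM10_of_blockSeq : MemM10 s := by
  have hA : CondA s := fun i => by
    have := gap_le_gap_succ_add_one hB i
    have : s (i + 1) ≤ s i + 1 := by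
      by_contra h
      have := (one_le_and_gap_succ_le_of_lt hB hC (i := i) (by omega)).2
      omega
    rw [abs_le]; omega
  refine ⟨hA, fun i => ⟨fun hfall j hj hji hpal hne => ?_, fun hrise j hj hji hpal hne => ?_⟩,
    ⟨?_, fun i hrise => ?_⟩⟩
  · by_contra h
    exact false_of_gap_fall_of_lt hB hfall hj hji hpal (by omega)
  · by_contra h
    exact false_of_gap_rise_of_le hB hC hrise hj hji hpal (by omega) fun _ => by omega
  · by_contra h
    have := (one_le_and_gap_succ_le_of_lt hB hC (i := 0) (by simp only [zero_add]; omega)).1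
    omega
  · have hi := (one_le_and_gap_succ_le_of_lt hB hC (i := i) (by omega)).1
    classical
    by_cases hdiff : ∃ j, 1 ≤ j ∧ j ≤ i ∧ s (i + j + 1) ≠ s (i - j)
    · obtain ⟨j, ⟨hj, hji, hne⟩, hfirst⟩ := Nat.findX hdiff
      have hpal : ∀ k, 1 ≤ k → k < j → s (i + k + 1) = s (i - k) := fun k h1 h2 => by
        by_contra h
        exact hfirst k h2 ⟨h1, by omega, h⟩
      refine ⟨j, hj, hji, ?_⟩
      by_contra h
      exact false_of_gap_rise_of_le hB hC hrise hj hji hpal (by omega) fun _ => by omega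
    · push Not at hdiff
      exact (false_of_gap_rise_of_le hB hC hrise hi le_rfl (fun k h1 h2 => hdiff k h1 (by omega))
        (hdiff i hi le_rfl).ge (absurd · (lt_irrefl i))).elim

end GapSequence

/-- Theorem 4.2: classification of sequences in `M₀₁` that are not identically zero. -/
theorem M01_classification (r : ℕ → ℕ) (hr : MemM01 r) (hne : r ≠ fun _ => 0) :
    ∃ R : ℕ, 1 ≤ R ∧
      ((∀ i, r i = R) ∨
        (r 0 = R - 1 ∧ ∀ i, r (i + 1) = R) ∨
        (∃ s : ℕ → ℕ, MemM10 s ∧ (∀ N, ∃ i, N ≤ i ∧ s i ≠ 0) ∧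
          ∀ n, r n = blockSeq (R - 1) R s n)) := by
  obtain ⟨hA, hB, hC⟩ := hr
  obtain ⟨m, hm, hmin⟩ : ∃ m, (∃ t, r t = m) ∧ ∀ t, m ≤ r t :=
    ⟨_, ⟨Function.argmin r, rfl⟩, fun t => Function.argmin_le r t⟩
  have hmax := le_add_one_of_forall_le hA hB hC hmin hm
  by_cases hfin : {t | r t = m}.Finite
  · exact ⟨m + 1, by omega, Or.inr (Or.inl (eq_of_finite_setOf_eq hB hC hmin hmax hm hfin))⟩
  by_cases hocc : ∃ t, r t = m + 1
  · obtain ⟨s, rfl⟩ := exists_eq_blockSeq (a := m) (b := m + 1)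
      (fun t => by have := hmin t; have := hmax t; omega)
      (infinite_setOf_eq_add_one hC hmin hmax hocc)
    exact ⟨m + 1, by omega, Or.inr (Or.inr ⟨s, memM10_of_blockSeq hB hC,
      frequently_ne_zero_of_infinite (by omega) hfin, fun n => rfl⟩)⟩
  · have hconst : ∀ t, r t = m := fun t => by
      have := hmin t; have := hmax t; have := not_exists.mp hocc t; omega
    refine ⟨m, Nat.one_le_iff_ne_zero.mpr fun hm0 => hne (funext fun t => ?_), Or.inl hconst⟩
    rw [hconst t, hm0]
end

section
/- Two real numbers θ and θ′ are ± equivalent if and only if ‖q·θ‖ = ‖q·θ′‖ for every positive integer q. -/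
/-! Since `‖x‖ = |x - round x|`, equal distances force `x - round x = ±(y - round y)`, so `x ∓ y`
is an integer; conversely `‖·‖` is invariant under `x ↦ k - x` and `x ↦ x + k`. The statement for
all `q` then follows from the case `q = 1`, because `±` equivalence is preserved by multiplying both
numbers by an integer. -/

theorem distNearestInt_eq_abs_sub_round (x : ℝ) : distNearestInt x = |x - round x| :=
  le_antisymm (csInf_le ⟨0, fun _ ⟨_, hp⟩ => hp ▸ abs_nonneg _⟩ ⟨round x, rfl⟩)
    (le_csInf (Set.range_nonempty _) fun _ ⟨p, hp⟩ => hp ▸ round_le x p)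

theorem distNearestInt_le_abs_sub_intCast (x : ℝ) (p : ℤ) : distNearestInt x ≤ |x - p| :=
  distNearestInt_eq_abs_sub_round x ▸ round_le x p

namespace PMEquiv

variable {x y : ℝ}

theorem symm (h : PMEquiv x y) : PMEquiv y x := by
  rcases h with ⟨k, hk⟩ | ⟨k, hk⟩
  · exact .inl ⟨k, by linarith⟩
  · exact .inr ⟨-k, by push_cast; linarith⟩

theorem intCast_mul (h : PMEquiv x y) (n : ℤ) : PMEquiv (n * x) (n * y) := by
  rcases h with ⟨k, hk⟩ | ⟨k, hk⟩
  · exact .inl ⟨n * k, by push_cast; rw [← hk]; ring⟩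
  · exact .inr ⟨n * k, by push_cast; rw [← hk]; ring⟩

theorem distNearestInt_le (h : PMEquiv x y) : distNearestInt y ≤ distNearestInt x := by
  rw [distNearestInt_eq_abs_sub_round x]
  rcases h with ⟨k, hk⟩ | ⟨k, hk⟩
  · calc distNearestInt y ≤ |y - ↑(k - round x)| := distNearestInt_le_abs_sub_intCast y _
      _ = |x - round x| := by rw [← abs_neg]; push_cast; congr 1; linarith
  · calc distNearestInt y ≤ |y - ↑(round x - k)| := distNearestInt_le_abs_sub_intCast y _
      _ = |x - round x| := by push_cast; congr 1; linarith

theorem distNearestInt_eq (h : PMEquiv x y) : distNearestInt x = distNearestInt y :=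
  le_antisymm h.symm.distNearestInt_le h.distNearestInt_le

end PMEquiv

theorem pmEquiv_of_distNearestInt_eq {x y : ℝ} (h : distNearestInt x = distNearestInt y) :
    PMEquiv x y := by
  rw [distNearestInt_eq_abs_sub_round, distNearestInt_eq_abs_sub_round, abs_eq_abs] at h
  rcases h with h | h
  · exact .inr ⟨round x - round y, by push_cast; linarith⟩
  · exact .inl ⟨round x + round y, by push_cast; linarith⟩

theorem distNearestInt_eq_iff_pmEquiv {x y : ℝ} :
    distNearestInt x = distNearestInt y ↔ PMEquiv x y :=
  ⟨pmEquiv_of_distNearestInt_eq, PMEquiv.distNearestInt_eq⟩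

/-- Two reals are ± equivalent iff `‖qθ‖ = ‖qθ'‖` for every positive integer `q`. -/
theorem pmEquiv_iff_dist (θ θ' : ℝ) :
    PMEquiv θ θ' ↔ ∀ q : ℕ, 0 < q →
      distNearestInt (q * θ) = distNearestInt (q * θ') := by
  refine ⟨fun h q _ => ?_, fun h => ?_⟩
  · simpa using (h.intCast_mul q).distNearestInt_eq
  · simpa using distNearestInt_eq_iff_pmEquiv.1 (h 1 one_pos)
end

section
/- Let (m, m₁, m₂) be a Markoff triple with m > 2 and associated Markoff form f_m, and let α and β be the two roots of f_m(x,1) = 0. Then α and β are not ± equivalent; that is, neither α + β nor α − β is an integer. -/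
section Quadratic

variable {R : Type*} [CommRing R] [NoZeroDivisors R] {a b c α β : R}

theorem mul_add_eq_neg_of_quadratic_roots (hα : a * α ^ 2 + b * α + c = 0)
    (hβ : a * β ^ 2 + b * β + c = 0) (hne : α ≠ β) : a * (α + β) = -b := by
  have hfac : (α - β) * (a * (α + β) + b) = 0 := by linear_combination hα - hβ
  linear_combination (mul_eq_zero.mp hfac).resolve_left (sub_ne_zero.mpr hne)

theorem sq_mul_sub_eq_discrim_of_quadratic_roots (hα : a * α ^ 2 + b * α + c = 0)
    (hβ : a * β ^ 2 + b * β + c = 0) (hne : α ≠ β) : (a * (α - β)) ^ 2 = discrim a b c := by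
  have hsum := mul_add_eq_neg_of_quadratic_roots hα hβ hne
  rw [discrim_eq_sq_of_quadratic_eq_zero (x := α) (by linear_combination hα)]
  linear_combination -(a * (α - β) + 2 * a * α + b) * hsum

end Quadratic

theorem Int.dvd_two_of_dvd_two_mul_of_dvd_sq_add_one {m u : ℤ} (h₁ : m ∣ 2 * u)
    (h₂ : m ∣ u ^ 2 + 1) : m ∣ 2 := by
  have h := dvd_sub (h₂.mul_left 2) (h₁.mul_right u)
  rwa [show 2 * (u ^ 2 + 1) - 2 * u * u = 2 by ring] at h

theorem Int.sq_ne_three_mul_add_two (x y : ℤ) : x ^ 2 ≠ 3 * y + 2 := by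
  intro h
  have h3 := congrArg (Int.cast : ℤ → ZMod 3) h
  push_cast at h3
  generalize (x : ZMod 3) = x' at h3
  generalize (y : ZMod 3) = y' at h3
  revert x' y'
  decide

theorem discrim_markoffForm {R : Type*} [CommRing R] {m u v : R} (hv : m * v = u ^ 2 + 1) :
    discrim m (3 * m - 2 * u) (v - 3 * u) = 9 * m ^ 2 - 4 := by
  rw [discrim]
  linear_combination -4 * hv

theorem markoff_roots_not_pmEquiv_general (m u v : ℤ) (hm : 2 < m)
    (hv : m * v = u ^ 2 + 1)
    (α β : ℝ) (hα : IsMarkoffFormRoot m u v α) (hβ : IsMarkoffFormRoot m u v β)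
    (hne : α ≠ β) : ¬PMEquiv α β := by
  have hsum := mul_add_eq_neg_of_quadratic_roots hα hβ hne
  have hdiff := sq_mul_sub_eq_discrim_of_quadratic_roots hα hβ hne
  rw [discrim_markoffForm (by exact_mod_cast hv)] at hdiff
  rintro (⟨k, hk⟩ | ⟨k, hk⟩)
  · rw [hk] at hsum
    have hk' : m * (k + 3) = 2 * u := by exact_mod_cast (by linarith : (m : ℝ) * (k + 3) = 2 * u)
    have hdvd := Int.dvd_two_of_dvd_two_mul_of_dvd_sq_add_one ⟨_, hk'.symm⟩ ⟨v, hv.symm⟩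
    have := Int.le_of_dvd two_pos hdvd
    omega
  · rw [hk] at hdiff
    have hk' : (m * k) ^ 2 = 9 * m ^ 2 - 4 := by exact_mod_cast hdiff
    exact Int.sq_ne_three_mul_add_two (m * k) (3 * m ^ 2 - 2) (by linear_combination hk')

/-- For a Markoff number `m > 2`, the two roots of `f_m(x,1) = 0` are not ± equivalent. -/
theorem markoff_roots_not_pmEquiv (m m₁ m₂ u v : ℤ) (hm : 2 < m)
    (hM : IsMarkoffTriple m m₁ m₂) (hu : IsMarkoffU m m₁ m₂ u)
    (hv : m * v = u ^ 2 + 1)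
    (α β : ℝ) (hα : IsMarkoffFormRoot m u v α) (hβ : IsMarkoffFormRoot m u v β)
    (hne : α ≠ β) : ¬PMEquiv α β :=
  markoff_roots_not_pmEquiv_general m u v hm hv α β hα hβ hne
end
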